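/- arXiv:2602.17538 — 5 statements merged into one kernel-verified Lean document; each statement's English description precedes it below -/
import Mathlib

section
/- For n > 2 and ρ > 0, the Fourier transform over ℝ⁴ of the function x ↦ 1/(ρ² + |x - X|²)ⁿ equals (2π²/Γ(n)) · e^{i p·X} · (|p|/(2ρ))^{n-2} · K_{n-2}(ρ|p|), where K_ν is the modified Bessel function of the second kind. -/
open MeasureTheory Real

noncomputable section

abbrev R4 := EuclideanSpace ℝ (Fin 4)

/-- Modified Bessel function of the second kind, via its integral representation. -/
def besselK (ν z : ℝ) : ℝ :=
  (1/2) * (z/2) ^ ν * ∫ t in Set.Ioi (0:ℝ), t ^ (-ν - 1) * Real.exp (-t - z^2 / (4*t))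

section Aux

open Set Complex

lemma aux_cov {b c : ℝ} (_hb : 0 < b) (hc : 0 < c) (m : ℝ) :
    ∫ s in Set.Ioi (0:ℝ), s ^ m * rexp (-(b*s) - c/s)
      = c ^ (m+1) * ∫ t in Set.Ioi (0:ℝ), t ^ (-m-2) * rexp (-t - (b*c)/t) := by
  set g : ℝ → ℝ := fun s => s ^ m * rexp (-(b*s) - c/s) with hg
  have h1 : (∫ x in Ioi (0:ℝ), g (c * x)) = c⁻¹ • ∫ x in Ioi (0:ℝ), g x := by
    simpa using integral_comp_mul_left_Ioi g 0 hc
  have h2 : (∫ x in Ioi (0:ℝ), (|(-1:ℝ)| * x ^ ((-1:ℝ) - 1)) • g (c * x ^ (-1:ℝ)))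
      = ∫ y in Ioi (0:ℝ), g (c * y) :=
    integral_comp_rpow_Ioi (fun y => g (c * y)) (by norm_num)
  have key : (∫ x in Ioi (0:ℝ), g x) = c • ∫ x in Ioi (0:ℝ), (x ^ ((-1:ℝ) - 1) * g (c * x⁻¹)) := by
    rw [← h2] at h1
    rw [smul_eq_mul] at h1 ⊢
    have := congrArg (fun z => c * z) h1
    simp only [← mul_assoc, mul_inv_cancel₀ hc.ne', one_mul] at this
    rw [← this]
    congr 1
    refine setIntegral_congr_fun measurableSet_Ioi (fun x hx => ?_)
    rw [Real.rpow_neg_one]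
    simp [abs_of_nonneg, mul_comm]
  rw [key, smul_eq_mul, ← integral_const_mul, ← integral_const_mul]
  refine setIntegral_congr_fun measurableSet_Ioi (fun t ht => ?_)
  have ht0 : (0:ℝ) < t := ht
  have h3 : g (c * t⁻¹) = (c ^ m * t ^ (-m)) * rexp (-t - (b*c)/t) := by
    rw [hg]
    simp only
    have e1 : (c * t⁻¹ : ℝ) ^ m = c ^ m * t ^ (-m) := by
      rw [Real.mul_rpow hc.le (by positivity), ← Real.rpow_neg_one t, ← Real.rpow_mul ht0.le]
      norm_num
    have e2 : -(b*(c*t⁻¹)) - c/(c*t⁻¹) = -t - (b*c)/t := by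
      field_simp
      ring
    rw [e1, e2]
  rw [h3]
  rw [show (-m - 2 : ℝ) = (-1 - 1) + (-m) by ring, Real.rpow_add ht0,
    show (m + 1 : ℝ) = 1 + m by ring, Real.rpow_add hc, Real.rpow_one]
  ring

lemma aux_finrank : Module.finrank ℝ R4 = 4 := by simp

lemma aux_gauss {s : ℝ} (hs : 0 < s) (p : R4) :
    ∫ y : R4, Complex.exp (-(s:ℂ) * ‖y‖^2 + Complex.I * ((inner ℝ p y : ℝ):ℂ))
      = (((π/s)^2 * rexp (-(‖p‖^2/(4*s))) : ℝ) : ℂ) := by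
  have h := GaussianFourier.integral_cexp_neg_mul_sq_norm_add (V := R4) (b := (s:ℂ))
    (by simpa using hs) Complex.I p
  rw [h, aux_finrank]
  have : ((4:ℕ) / 2 : ℂ) = ((2:ℕ) : ℂ) := by norm_num
  rw [show ((4:ℕ) / 2 : ℂ) = ((2:ℕ):ℂ) from this, Complex.cpow_natCast]
  push_cast
  rw [Complex.I_sq]
  ring_nf

lemma aux_rgauss {s : ℝ} (hs : 0 < s) :
    ∫ y : R4, rexp (-(s * ‖y‖^2)) = (π/s)^2 := by
  have h := GaussianFourier.integral_rexp_neg_mul_sq_norm (V := R4) hs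
  rw [aux_finrank] at h
  rw [show (fun y : R4 => rexp (-(s * ‖y‖^2))) = fun y : R4 => rexp (-s * ‖y‖^2) by
    funext y; ring_nf] at *
  rw [h, show ((4:ℕ)/2 : ℝ) = ((2:ℕ):ℝ) by norm_num, Real.rpow_natCast]

lemma aux_schwinger (n : ℕ) (hn : 0 < n) {a : ℝ} (ha : 0 < a) :
    ∫ s in Set.Ioi (0:ℝ), s ^ (n-1) * rexp (-(a*s)) = Real.Gamma n / a ^ n := by
  have h := integral_rpow_mul_exp_neg_mul_Ioi (a := (n:ℝ)) (r := a) (by positivity) ha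
  rw [show ∫ s in Set.Ioi (0:ℝ), s ^ (n-1) * rexp (-(a*s))
      = ∫ t in Set.Ioi (0:ℝ), t ^ ((n:ℝ) - 1) * rexp (-(a*t)) from
    setIntegral_congr_fun measurableSet_Ioi (fun t ht => by
      rw [show (n:ℝ) - 1 = ((n - 1 : ℕ) : ℝ) by
            push_cast [Nat.cast_sub hn]; ring,
          Real.rpow_natCast]), h]
  rw [Real.rpow_natCast, div_pow, one_pow, one_div, div_eq_mul_inv, mul_comm]

lemma aux_main (n : ℕ) (hn : 2 < n) (ρ : ℝ) (hρ : 0 < ρ) (p : R4) :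
    ∫ y : R4, Complex.exp (Complex.I * ((inner ℝ p y : ℝ) : ℂ)) / (((ρ^2 + ‖y‖^2 : ℝ) : ℂ) ^ n)
      = (((Real.Gamma n)⁻¹ : ℝ) : ℂ) *
        ((∫ s in Ioi (0:ℝ), π^2 * s^((n:ℝ)-3) * rexp (-(ρ^2*s) - ‖p‖^2/(4*s)) : ℝ) : ℂ) := by
  have hn0 : 0 < n := by omega
  have hΓ : 0 < Real.Gamma n := Real.Gamma_pos_of_pos (by positivity)
  set f : ℝ → R4 → ℂ := fun s y => Complex.exp (Complex.I * ((inner ℝ p y : ℝ) : ℂ)) *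
      ((s^(n-1) * rexp (-((ρ^2+‖y‖^2) * s)) : ℝ) : ℂ) with hf
  have hf_eq : ∀ s y, f s y = ((s^(n-1) * rexp (-(ρ^2*s)) : ℝ) : ℂ) *
      Complex.exp (-(s:ℂ) * ‖y‖^2 + Complex.I * ((inner ℝ p y : ℝ) : ℂ)) := by
    intro s y
    rw [hf]
    push_cast
    conv_lhs => rw [mul_left_comm, ← Complex.exp_add]
    conv_rhs => rw [mul_assoc, ← Complex.exp_add]
    congr 2
    ring
  -- continuity
  have hcont : Continuous (fun q : ℝ × R4 => f q.1 q.2) := by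
    rw [hf]
    have c1 : Continuous fun q : ℝ × R4 => ((inner ℝ p q.2 : ℝ) : ℂ) :=
      Complex.continuous_ofReal.comp (continuous_const.inner continuous_snd)
    have c2 : Continuous fun q : ℝ × R4 => (q.1^(n-1) * rexp (-((ρ^2+‖q.2‖^2) * q.1)) : ℝ) := by
      fun_prop
    exact (Complex.continuous_exp.comp (continuous_const.mul c1)).mul
      (Complex.continuous_ofReal.comp c2)
  -- pointwise Schwinger
  have claim1 : ∀ y : R4,
      Complex.exp (Complex.I * ((inner ℝ p y : ℝ) : ℂ)) / (((ρ^2 + ‖y‖^2 : ℝ) : ℂ) ^ n)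
        = (((Real.Gamma n)⁻¹ : ℝ) : ℂ) * ∫ s in Ioi (0:ℝ), f s y := by
    intro y
    have ha : (0:ℝ) < ρ^2 + ‖y‖^2 := by positivity
    have h1 : ∫ s in Ioi (0:ℝ), f s y
        = Complex.exp (Complex.I * ((inner ℝ p y : ℝ) : ℂ)) *
          ((∫ s in Ioi (0:ℝ), s^(n-1) * rexp (-((ρ^2+‖y‖^2) * s)) : ℝ) : ℂ) := by
      rw [hf, integral_const_mul]
      exact congrArg _ integral_ofReal
    rw [h1, aux_schwinger n hn0 ha]
    have hpow : ((ρ^2 + ‖y‖^2 : ℝ) : ℂ) ^ n ≠ 0 :=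
      pow_ne_zero _ (Complex.ofReal_ne_zero.mpr ha.ne')
    have hane : ((ρ^2 + ‖y‖^2 : ℝ) : ℂ) ≠ 0 := Complex.ofReal_ne_zero.mpr ha.ne'
    push_cast at hane
    have hΓc : (Real.Gamma n : ℂ) ≠ 0 := Complex.ofReal_ne_zero.mpr hΓ.ne'
    push_cast
    field_simp
  -- product integrability
  have hint : Integrable (Function.uncurry f)
      ((volume.restrict (Ioi 0)).prod volume) := by
    have huc : Function.uncurry f = fun q : ℝ × R4 => f q.1 q.2 := rfl
    rw [huc, integrable_prod_iff hcont.aestronglyMeasurable]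
    constructor
    · filter_upwards [ae_restrict_mem measurableSet_Ioi] with s hs
      have hs0 : (0:ℝ) < s := hs
      simp only [hf_eq]
      exact (GaussianFourier.integrable_cexp_neg_mul_sq_norm_add (V := R4)
        (by simpa using hs0) Complex.I p).const_mul _
    · have hbase : IntegrableOn (fun x : ℝ => x ^ ((n:ℝ)-3) * rexp (-ρ^2 * x ^ (1:ℝ)))
          (Ioi 0) := by
        refine integrableOn_rpow_mul_exp_neg_mul_rpow ?_ zero_lt_one (by positivity)
        have : (3:ℝ) ≤ n := by exact_mod_cast hn
        linarith
      refine (Integrable.congr ((hbase.const_mul (π^2)) :) ?_)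
      filter_upwards [ae_restrict_mem measurableSet_Ioi] with s hs
      have hs0 : (0:ℝ) < s := hs
      have hnorm : ∀ y : R4, ‖f s y‖ = s^(n-1) * rexp (-(ρ^2*s)) * rexp (-(s * ‖y‖^2)) := by
        intro y
        rw [hf_eq]
        rw [norm_mul, Complex.norm_real, Real.norm_eq_abs,
          _root_.abs_of_nonneg (mul_nonneg (pow_nonneg hs0.le _) (Real.exp_nonneg _)),
          Complex.norm_exp]
        have : (-(s:ℂ) * ‖y‖^2 + Complex.I * ((inner ℝ p y : ℝ) : ℂ)).re = -(s * ‖y‖^2) := by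
          simp [← Complex.ofReal_pow]
        rw [this]
      simp only [hnorm]
      rw [integral_const_mul, aux_rgauss hs0]
      have hs3 : s ^ ((n:ℝ)-3) = s ^ (n-3) := by
        rw [show (n:ℝ) - 3 = ((n - 3 : ℕ) : ℝ) by push_cast [Nat.cast_sub (by omega : 3 ≤ n)]; ring,
          Real.rpow_natCast]
      rw [Real.rpow_one, hs3,
        show s ^ (n-1) = s ^ (n-3) * s^2 by rw [← pow_add]; congr 1; omega, div_pow]
      field_simp
  -- main computation
  calc ∫ y : R4, Complex.exp (Complex.I * ((inner ℝ p y : ℝ) : ℂ)) / (((ρ^2 + ‖y‖^2 : ℝ) : ℂ) ^ n)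
      = ∫ y : R4, (((Real.Gamma n)⁻¹ : ℝ) : ℂ) * ∫ s in Ioi (0:ℝ), f s y := by
        simp only [claim1]
    _ = (((Real.Gamma n)⁻¹ : ℝ) : ℂ) * ∫ y : R4, ∫ s in Ioi (0:ℝ), f s y := integral_const_mul _ _
    _ = (((Real.Gamma n)⁻¹ : ℝ) : ℂ) * ∫ s in Ioi (0:ℝ), ∫ y : R4, f s y := by
        rw [integral_integral_swap hint]
    _ = (((Real.Gamma n)⁻¹ : ℝ) : ℂ) *
        ∫ s in Ioi (0:ℝ), ((π^2 * s^((n:ℝ)-3) * rexp (-(ρ^2*s) - ‖p‖^2/(4*s)) : ℝ) : ℂ) := by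
        congr 1
        refine setIntegral_congr_fun measurableSet_Ioi (fun s hs => ?_)
        have hs0 : (0:ℝ) < s := hs
        simp only [hf_eq]
        rw [integral_const_mul, aux_gauss hs0 p]
        rw [← Complex.ofReal_mul]
        congr 1
        have hs3 : s ^ ((n:ℝ)-3) = s ^ (n-3) := by
          rw [show (n:ℝ) - 3 = ((n - 3 : ℕ) : ℝ) by
              push_cast [Nat.cast_sub (by omega : 3 ≤ n)]; ring, Real.rpow_natCast]
        rw [hs3, div_pow,
          show s ^ (n-1) = s ^ (n-3) * s^2 by rw [← pow_add]; congr 1; omega,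
          show rexp (-(ρ^2*s) - ‖p‖^2/(4*s)) = rexp (-(ρ^2*s)) * rexp (-(‖p‖^2/(4*s))) by
            rw [← Real.exp_add]; ring_nf]
        field_simp
    _ = (((Real.Gamma n)⁻¹ : ℝ) : ℂ) *
        ((∫ s in Ioi (0:ℝ), π^2 * s^((n:ℝ)-3) * rexp (-(ρ^2*s) - ‖p‖^2/(4*s)) : ℝ) : ℂ) := by
        exact congrArg _ integral_ofReal

end Aux

theorem fourier_transform_instanton_profile
    (n : ℕ) (hn : 2 < n) (ρ : ℝ) (hρ : 0 < ρ) (p X : R4) (hp : p ≠ 0) :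
    (∫ x : R4, Complex.exp (Complex.I * ((inner ℝ p x : ℝ) : ℂ)) /
        (((ρ^2 + ‖x - X‖^2 : ℝ) : ℂ) ^ n))
      = ((2 * π^2 / Real.Gamma n : ℝ) : ℂ) *
          Complex.exp (Complex.I * ((inner ℝ p X : ℝ) : ℂ)) *
          (((‖p‖ / (2*ρ)) ^ ((n : ℝ) - 2) : ℝ) : ℂ) *
          ((besselK ((n : ℝ) - 2) (ρ * ‖p‖) : ℝ) : ℂ) := by
  open Set Complex in
  have hp0 : (0:ℝ) < ‖p‖ := norm_pos_iff.mpr hp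
  have hΓ : 0 < Real.Gamma n := Real.Gamma_pos_of_pos (by positivity)
  have htrans : (∫ x : R4, Complex.exp (Complex.I * ((inner ℝ p x : ℝ) : ℂ)) /
        (((ρ^2 + ‖x - X‖^2 : ℝ) : ℂ) ^ n))
      = Complex.exp (Complex.I * ((inner ℝ p X : ℝ) : ℂ)) *
        ∫ y : R4, Complex.exp (Complex.I * ((inner ℝ p y : ℝ) : ℂ)) /
          (((ρ^2 + ‖y‖^2 : ℝ) : ℂ) ^ n) := by
    rw [← integral_const_mul]
    calc (∫ x : R4, Complex.exp (Complex.I * ((inner ℝ p x : ℝ) : ℂ)) /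
            (((ρ^2 + ‖x - X‖^2 : ℝ) : ℂ) ^ n))
        = ∫ x : R4, (fun y : R4 => Complex.exp (Complex.I * ((inner ℝ p X : ℝ) : ℂ)) *
            (Complex.exp (Complex.I * ((inner ℝ p y : ℝ) : ℂ)) /
              (((ρ^2 + ‖y‖^2 : ℝ) : ℂ) ^ n))) (x - X) := by
          congr 1
          funext x
          simp only
          have hin : (inner ℝ p x : ℝ) = (inner ℝ p X : ℝ) + (inner ℝ p (x - X) : ℝ) := by
            rw [inner_sub_right]; ring
          rw [hin]
          push_cast
          rw [mul_add, Complex.exp_add]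
          ring
      _ = _ := by
          exact integral_sub_right_eq_self (fun y : R4 => Complex.exp (Complex.I * ((inner ℝ p X : ℝ) : ℂ)) * (Complex.exp (Complex.I * ((inner ℝ p y : ℝ) : ℂ)) / (((ρ^2 + ‖y‖^2 : ℝ) : ℂ) ^ n))) X
  rw [htrans, aux_main n hn ρ hρ p, ← Complex.ofReal_mul]
  have h1 : ∫ s in Ioi (0:ℝ), π^2 * s^((n:ℝ)-3) * rexp (-(ρ^2*s) - ‖p‖^2/(4*s))
      = π^2 * ∫ s in Ioi (0:ℝ), s^((n:ℝ)-3) * rexp (-(ρ^2*s) - (‖p‖^2/4)/s) := by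
    rw [← integral_const_mul]
    congr 1
    funext s
    rw [show ‖p‖^2/(4*s) = ‖p‖^2/4/s by rw [div_div]]
    ring
  have hreal : (Real.Gamma n)⁻¹ *
        (∫ s in Ioi (0:ℝ), π^2 * s^((n:ℝ)-3) * rexp (-(ρ^2*s) - ‖p‖^2/(4*s)))
      = (2*π^2/Real.Gamma n) * ((‖p‖/(2*ρ))^((n:ℝ)-2)) * besselK ((n:ℝ)-2) (ρ*‖p‖) := by
    rw [h1, aux_cov (by positivity) (by positivity) ((n:ℝ)-3)]
    have h2 : ∫ t in Ioi (0:ℝ), t^(-((n:ℝ)-3)-2) * rexp (-t - (ρ^2*(‖p‖^2/4))/t)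
        = ∫ t in Ioi (0:ℝ), t^(-((n:ℝ)-2)-1) * rexp (-t - (ρ*‖p‖)^2/(4*t)) := by
      congr 1
      funext t
      rw [show (-((n:ℝ)-3)-2) = (-((n:ℝ)-2)-1) by ring,
        show (ρ^2*(‖p‖^2/4))/t = (ρ*‖p‖)^2/(4*t) by rw [mul_pow]; ring]
    rw [h2, show ((n:ℝ)-3)+1 = (n:ℝ)-2 by ring, besselK]
    rw [show (‖p‖^2/4 : ℝ) = (‖p‖/(2*ρ)) * (ρ*‖p‖/2) by field_simp; ring,
      Real.mul_rpow (by positivity) (by positivity)]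
    ring
  rw [hreal]
  push_cast
  ring
end
end

section
/- The Fourier transform of the charge-1 instanton density D(x) = (6/π²) ρ⁴/(ρ² + |x−X|²)⁴ equals (1/2) e^{i p·X} ρ² |p|² K₂(ρ|p|) for all nonzero p ∈ ℝ⁴. -/
open MeasureTheory Real

noncomputable section

open Set Complex in
private lemma scaling_lemma' {a : ℝ} (b : ℝ) (ha : 0 < a) :
    ∫ t in Ioi (0:ℝ), t * Real.exp (-(a*t) - b/t)
      = (a⁻¹)^2 * ∫ s in Ioi (0:ℝ), s * Real.exp (-s - (a*b)/s) := by
  have h := integral_comp_mul_left_Ioi (fun t => t * Real.exp (-(a*t) - b/t)) 0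
    (inv_pos.mpr ha)
  simp only [mul_zero, smul_eq_mul, inv_inv] at h
  have h2 : ∫ x in Ioi (0:ℝ), a⁻¹ * x * Real.exp (-(a * (a⁻¹ * x)) - b / (a⁻¹ * x))
      = a⁻¹ * ∫ s in Ioi (0:ℝ), s * Real.exp (-s - (a*b)/s) := by
    rw [← integral_const_mul]
    refine setIntegral_congr_fun measurableSet_Ioi (fun x hx => ?_)
    have hx0 : (0:ℝ) < x := hx
    have hane : a ≠ 0 := ha.ne'
    have hxne : x ≠ 0 := hx0.ne'
    rw [show a * (a⁻¹ * x) = x by field_simp]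
    rw [show b / (a⁻¹ * x) = a * b / x by field_simp]
    ring
  rw [h2] at h
  have := congrArg (fun y => a⁻¹ * y) h
  rw [← mul_assoc, ← mul_assoc] at this
  field_simp at this ⊢
  linarith [this]

open Set in
private lemma inversion_lemma' {c : ℝ} (hc : 0 < c) :
    ∫ t in Ioi (0:ℝ), t ^ (-(3:ℝ)) * Real.exp (-t - c/t)
      = (c⁻¹)^2 * ∫ s in Ioi (0:ℝ), s * Real.exp (-s - c/s) := by
  have h := integral_comp_rpow_Ioi (fun y => y ^ (-(3:ℝ)) * Real.exp (-y - c/y))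
    (p := -1) (by norm_num)
  rw [← h]
  have h2 : ∀ x ∈ Ioi (0:ℝ),
      (|(-1:ℝ)| * x ^ ((-1:ℝ)-1)) • ((fun y => y ^ (-(3:ℝ)) * Real.exp (-y - c/y)) (x^((-1):ℝ)))
      = x * Real.exp (-(c*x) - 1/x) := by
    intro x hx
    have hx0 : (0:ℝ) < x := hx
    simp only [Real.rpow_neg_one x, smul_eq_mul, abs_neg, abs_one, one_mul]
    have e1 : x⁻¹ ^ (-(3:ℝ)) = x ^ (3:ℝ) := by
      rw [Real.inv_rpow hx0.le, ← Real.rpow_neg hx0.le]; norm_num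
    have e3 : -x⁻¹ - c / x⁻¹ = -(c*x) - 1/x := by
      field_simp; ring
    rw [e1, e3, ← mul_assoc, ← Real.rpow_add hx0]
    norm_num
  rw [setIntegral_congr_fun measurableSet_Ioi h2, scaling_lemma' (a := c) 1 hc]
  norm_num

open Set in
private lemma besselK_two' {z : ℝ} (hz : 0 < z) :
    ∫ s in Ioi (0:ℝ), s * Real.exp (-s - z^2/(4*s)) = z^2/2 * besselK 2 z := by
  have hc : (0:ℝ) < z^2/4 := by positivity
  have h := inversion_lemma' hc
  have e : ∀ t ∈ Ioi (0:ℝ), t ^ (-(2:ℝ) - 1) * Real.exp (-t - z^2 / (4*t))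
      = t ^ (-(3:ℝ)) * Real.exp (-t - (z^2/4)/t) := by
    intro t ht
    rw [show (-(2:ℝ)-1) = -(3:ℝ) by norm_num, div_div]
  have e2 : ∀ s ∈ Ioi (0:ℝ), s * Real.exp (-s - (z^2/4)/s) = s * Real.exp (-s - z^2/(4*s)) := by
    intro s hs; rw [div_div]
  unfold besselK
  rw [setIntegral_congr_fun measurableSet_Ioi e, h, setIntegral_congr_fun measurableSet_Ioi e2]
  rw [Real.rpow_two]
  generalize (∫ s in Ioi (0:ℝ), s * Real.exp (-s - z^2/(4*s))) = I
  have hz4 : z^2/4 ≠ 0 := hc.ne'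
  field_simp
  ring

open Set in
private lemma T_value' {ρ pn : ℝ} (hρ : 0 < ρ) (hpn : 0 < pn) :
    ∫ t in Ioi (0:ℝ), t * Real.exp (-(ρ^2*t) - pn^2/(4*t))
      = pn^2/(2*ρ^2) * besselK 2 (ρ*pn) := by
  have h1 : ∫ t in Ioi (0:ℝ), t * Real.exp (-(ρ^2*t) - pn^2/(4*t))
      = ∫ t in Ioi (0:ℝ), t * Real.exp (-(ρ^2*t) - (pn^2/4)/t) := by
    refine setIntegral_congr_fun measurableSet_Ioi fun t ht => ?_
    rw [div_div]
  rw [h1, scaling_lemma' (pn^2/4) (by positivity)]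
  have h2 : ∫ s in Ioi (0:ℝ), s * Real.exp (-s - (ρ^2*(pn^2/4))/s)
      = ∫ s in Ioi (0:ℝ), s * Real.exp (-s - (ρ*pn)^2/(4*s)) := by
    refine setIntegral_congr_fun measurableSet_Ioi fun s hs => ?_
    have hs0 : (0:ℝ) < s := hs
    congr 2
    field_simp
  rw [h2, besselK_two' (mul_pos hρ hpn)]
  have hρ0 : ρ ≠ 0 := hρ.ne'
  field_simp

open Set in
private lemma gamma4' {A : ℝ} (hA : 0 < A) :
    ∫ t in Ioi (0:ℝ), t^3 * Real.exp (-(A*t)) = 6/A^4 := by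
  have h := integral_rpow_mul_exp_neg_mul_Ioi (a := 4) (r := A) (by norm_num) hA
  have e : ∀ t ∈ Ioi (0:ℝ), t ^ ((4:ℝ)-1) * Real.exp (-(A*t)) = t^3 * Real.exp (-(A*t)) := by
    intro t ht
    rw [show ((4:ℝ)-1) = ((3:ℕ):ℝ) by norm_num, Real.rpow_natCast]
  rw [setIntegral_congr_fun measurableSet_Ioi e] at h
  rw [h, show ((4:ℝ)) = ((3:ℕ):ℝ)+1 by norm_num, Real.Gamma_nat_eq_factorial,
    show (((3:ℕ):ℝ)+1) = ((4:ℕ):ℝ) by norm_num, Real.rpow_natCast]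
  norm_num [Nat.factorial]
  ring

open Set Complex in
private lemma gauss4' {t : ℝ} (ht : 0 < t) (p : R4) :
    ∫ x : R4, Complex.exp (-(t:ℂ) * ‖x‖^2 + Complex.I * ((inner ℝ p x : ℝ):ℂ))
      = ((π:ℂ)/t)^2 * Complex.exp (-((‖p‖^2:ℝ):ℂ)/(4*t)) := by
  have h := GaussianFourier.integral_cexp_neg_mul_sq_norm_add (V := R4) (b := (t:ℂ))
    (by simpa using ht) Complex.I p
  rw [h]
  have : (Module.finrank ℝ R4 / 2 : ℂ) = ((2:ℕ):ℂ) := by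
    simp [finrank_euclideanSpace_fin]; norm_num
  rw [this, Complex.cpow_natCast]
  congr 1
  rw [Complex.I_sq]
  push_cast
  ring

open Set Complex in
private lemma cont_aux' (ρ : ℝ) (p : R4) : Continuous (Function.uncurry fun (x : R4) (t : ℝ) =>
    Complex.exp (Complex.I * ((inner ℝ p x : ℝ):ℂ)) *
      ((t^3 * Real.exp (-((ρ^2 + ‖x‖^2)*t)) : ℝ) : ℂ)) := by
  have hinner : Continuous fun x : R4 => (inner ℝ p x : ℝ) := continuous_const.inner continuous_id
  apply Continuous.mul
  · exact Complex.continuous_exp.comp (continuous_const.mul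
      (Complex.continuous_ofReal.comp (hinner.comp continuous_fst)))
  · apply Complex.continuous_ofReal.comp
    fun_prop

open Set Complex in
private lemma norm_int_eq' {ρ : ℝ} (p : R4) {t : ℝ} (ht : 0 < t) :
    (∫ x : R4, ‖Complex.exp (Complex.I * ((inner ℝ p x : ℝ):ℂ)) *
        ((t^3 * Real.exp (-((ρ^2 + ‖x‖^2)*t)) : ℝ) : ℂ)‖)
      = π^2 * (t * Real.exp (-(ρ^2 * t))) := by
  have h1 : ∀ x : R4, ‖Complex.exp (Complex.I * ((inner ℝ p x : ℝ):ℂ)) *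
      ((t^3 * Real.exp (-((ρ^2 + ‖x‖^2)*t)) : ℝ) : ℂ)‖
      = (t^3 * Real.exp (-(ρ^2*t))) * Real.exp (-t * ‖x‖^2) := by
    intro x
    simp only [norm_mul, Complex.norm_exp, Complex.norm_real, Real.norm_eq_abs]
    have h0 : (Complex.I * ((inner ℝ p x : ℝ):ℂ)).re = 0 := by simp
    rw [h0, Real.exp_zero, one_mul, ← abs_mul,
      _root_.abs_of_nonneg (show (0:ℝ) ≤ t^3 * Real.exp (-((ρ^2 + ‖x‖^2)*t)) by positivity),
      mul_assoc, ← Real.exp_add]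
    ring_nf
  simp_rw [h1]
  rw [integral_const_mul, GaussianFourier.integral_rexp_neg_mul_sq_norm ht]
  have : ((Module.finrank ℝ R4 : ℝ) / 2) = ((2:ℕ):ℝ) := by
    simp [finrank_euclideanSpace_fin]; norm_num
  rw [this, Real.rpow_natCast]
  field_simp

open Set Complex in
private lemma fubini_int' {ρ : ℝ} (hρ : 0 < ρ) (p : R4) :
    Integrable (Function.uncurry fun (x : R4) (t : ℝ) =>
        Complex.exp (Complex.I * ((inner ℝ p x : ℝ):ℂ)) *
          ((t^3 * Real.exp (-((ρ^2 + ‖x‖^2)*t)) : ℝ) : ℂ))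
      (volume.prod (volume.restrict (Ioi 0))) := by
  rw [MeasureTheory.integrable_prod_iff' (cont_aux' ρ p).aestronglyMeasurable]
  constructor
  · filter_upwards [ae_restrict_mem measurableSet_Ioi] with t ht
    have ht0 : (0:ℝ) < t := ht
    have hbase := (GaussianFourier.integrable_cexp_neg_mul_sq_norm_add (V := R4)
      (b := (t:ℂ)) (by simpa using ht0) Complex.I p).const_mul
      ((t^3 * Real.exp (-(ρ^2*t)) : ℝ) : ℂ)
    apply hbase.congr
    filter_upwards with x
    simp only [Function.uncurry_apply_pair]
    push_cast
    rw [mul_assoc, ← Complex.exp_add, mul_comm (Complex.exp (Complex.I * _)), mul_assoc,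
      ← Complex.exp_add]
    congr 2
    ring
  · have hint : Integrable (fun t : ℝ => π^2 * (t * Real.exp (-(ρ^2 * t))))
        (volume.restrict (Ioi 0)) := by
      have h : IntegrableOn (fun t : ℝ => t ^ (1:ℝ) * Real.exp (-ρ^2 * t ^ (1:ℝ))) (Ioi 0) :=
        integrableOn_rpow_mul_exp_neg_mul_rpow (by norm_num) zero_lt_one (by positivity)
      rw [IntegrableOn] at h
      apply (h.const_mul (π^2)).congr
      filter_upwards with t
      rw [Real.rpow_one]
      ring_nf
    apply hint.congr
    filter_upwards [ae_restrict_mem measurableSet_Ioi] with t ht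
    exact (norm_int_eq' p ht).symm

open Set in
private lemma ofReal_int' (f : ℝ → ℝ) :
    (∫ x in Ioi (0:ℝ), ((f x : ℝ):ℂ)) = ((∫ x in Ioi (0:ℝ), f x : ℝ) : ℂ) :=
  integral_ofReal

open Set Complex in
theorem fourier_transform_instanton_density
    (ρ : ℝ) (hρ : 0 < ρ) (X : R4) (p : R4) (hp : p ≠ 0) :
    (∫ x : R4, Complex.exp (Complex.I * ((inner ℝ p x : ℝ) : ℂ)) *
        (((6 / π^2) * ρ^4 / (ρ^2 + ‖x - X‖^2)^4 : ℝ) : ℂ))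
      = ((1/2 : ℝ) : ℂ) * Complex.exp (Complex.I * ((inner ℝ p X : ℝ) : ℂ)) *
          ((ρ^2 * ‖p‖^2 * besselK 2 (ρ * ‖p‖) : ℝ) : ℂ) := by
  have hpn : 0 < ‖p‖ := norm_pos_iff.mpr hp
  -- translation step
  have step1 : (∫ x : R4, Complex.exp (Complex.I * ((inner ℝ p x : ℝ) : ℂ)) *
        (((6 / π^2) * ρ^4 / (ρ^2 + ‖x - X‖^2)^4 : ℝ) : ℂ))
      = Complex.exp (Complex.I * ((inner ℝ p X : ℝ) : ℂ)) *
        ∫ x : R4, Complex.exp (Complex.I * ((inner ℝ p x : ℝ) : ℂ)) *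
          (((6 / π^2) * ρ^4 / (ρ^2 + ‖x‖^2)^4 : ℝ) : ℂ) := by
    rw [← MeasureTheory.integral_add_right_eq_self (μ := volume)
      (fun y : R4 => Complex.exp (Complex.I * ((inner ℝ p y : ℝ) : ℂ)) *
        (((6 / π^2) * ρ^4 / (ρ^2 + ‖y - X‖^2)^4 : ℝ) : ℂ)) X, ← integral_const_mul]
    congr 1
    funext x
    have hadd : (inner ℝ p (x + X) : ℝ) = (inner ℝ p X : ℝ) + (inner ℝ p x : ℝ) := by
      rw [inner_add_right]; ring
    simp only [add_sub_cancel_right, hadd]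
    push_cast
    rw [mul_add, Complex.exp_add]
    ring
  rw [step1]
  -- pointwise Schwinger trick
  have key : ∀ x : R4, Complex.exp (Complex.I * ((inner ℝ p x : ℝ) : ℂ)) *
        (((6 / π^2) * ρ^4 / (ρ^2 + ‖x‖^2)^4 : ℝ) : ℂ)
      = ((ρ^4/π^2 : ℝ):ℂ) * ∫ t in Ioi (0:ℝ),
          Complex.exp (Complex.I * ((inner ℝ p x : ℝ) : ℂ)) *
            ((t^3 * Real.exp (-((ρ^2 + ‖x‖^2)*t)) : ℝ) : ℂ) := by
    intro x
    have hA : 0 < ρ^2 + ‖x‖^2 := by positivity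
    have hr : (6 / π^2) * ρ^4 / (ρ^2 + ‖x‖^2)^4
        = ρ^4/π^2 * ∫ t in Ioi (0:ℝ), t^3 * Real.exp (-((ρ^2+‖x‖^2)*t)) := by
      rw [gamma4' hA]
      have : (ρ^2 + ‖x‖^2)^4 ≠ 0 := by positivity
      field_simp
    rw [hr, Complex.ofReal_mul, MeasureTheory.integral_const_mul,
      ofReal_int' (fun t => t^3 * Real.exp (-((ρ^2+‖x‖^2)*t)))]
    ring
  simp_rw [key]
  rw [MeasureTheory.integral_const_mul]
  -- Fubini
  rw [MeasureTheory.integral_integral_swap (fubini_int' hρ p)]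
  -- inner Gaussian integral
  have inner_eq : ∀ t ∈ Ioi (0:ℝ),
      (∫ x : R4, Complex.exp (Complex.I * ((inner ℝ p x : ℝ):ℂ)) *
          ((t^3 * Real.exp (-((ρ^2 + ‖x‖^2)*t)) : ℝ):ℂ))
      = ((π^2 * (t * Real.exp (-(ρ^2*t) - ‖p‖^2/(4*t))) : ℝ):ℂ) := by
    intro t ht
    have ht0 : (0:ℝ) < t := ht
    have htne : (t:ℂ) ≠ 0 := by exact_mod_cast ht0.ne'
    have hx : ∀ x : R4, Complex.exp (Complex.I * ((inner ℝ p x : ℝ):ℂ)) *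
        ((t^3 * Real.exp (-((ρ^2 + ‖x‖^2)*t)) : ℝ):ℂ)
        = ((t^3 * Real.exp (-(ρ^2*t)) : ℝ):ℂ) *
            Complex.exp (-(t:ℂ) * ‖x‖^2 + Complex.I * ((inner ℝ p x : ℝ):ℂ)) := by
      intro x
      push_cast
      rw [mul_assoc, ← Complex.exp_add, mul_comm (Complex.exp (Complex.I * _)), mul_assoc,
        ← Complex.exp_add]
      congr 2
      ring
    simp_rw [hx]
    rw [MeasureTheory.integral_const_mul, gauss4' ht0 p]
    push_cast
    simp only [neg_div, Complex.exp_sub, Complex.exp_neg]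
    field_simp [Complex.exp_ne_zero]
  rw [setIntegral_congr_fun measurableSet_Ioi inner_eq]
  have e : (∫ x in Ioi (0:ℝ), ((π^2 * (x * Real.exp (-(ρ^2*x) - ‖p‖^2/(4*x))) : ℝ) : ℂ))
      = ((π^2 * (‖p‖^2/(2*ρ^2) * besselK 2 (ρ*‖p‖)) : ℝ) : ℂ) := by
    rw [ofReal_int' (fun x => π^2 * (x * Real.exp (-(ρ^2*x) - ‖p‖^2/(4*x)))),
      MeasureTheory.integral_const_mul, T_value' hρ hpn]
  rw [e]
  have hπ : (π:ℂ) ≠ 0 := by exact_mod_cast Real.pi_ne_zero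
  have hρ0 : (ρ:ℂ) ≠ 0 := by exact_mod_cast hρ.ne'
  push_cast
  field_simp
end
end

section
/- Suppose D : ℝ⁴ → ℝ extends to a holomorphic function on the tube domain {x + iy ∈ ℂ⁴ : |y| < C} for some C > 0, is bounded by 2 on this domain, and satisfies |D(x)| ≤ M/(1+|x|)⁶ for real x. Then for every 0 < c < C there exists a constant A such that |D̂(p)| ≤ A e^{-c|p|/3} for all p ∈ ℝ⁴, where D̂(p) = ∫_{ℝ⁴} e^{ip·x} D(x) dx. -/
open MeasureTheory Real

open Filter

set_option maxHeartbeats 2000000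

noncomputable section

/-- The tube domain of width `C` around the real points of `ℂ⁴`. -/
def tube (C : ℝ) : Set (Fin 4 → ℂ) := {z | ∑ i : Fin 4, (z i).im ^ 2 < C ^ 2}

lemma contour_shift (g : ℂ → ℂ) (a : ℝ) (ha : 0 < a)
    (hd : ∀ ζ : ℂ, ζ.im ∈ Set.Icc 0 a → DifferentiableAt ℂ g ζ)
    {B κ : ℝ} (hκ : 0 < κ)
    (hbd : ∀ ζ : ℂ, ζ.im ∈ Set.Icc 0 a → ‖g ζ‖ ≤ B * Real.exp (-κ * ζ.re ^ 2)) :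
    (∫ t : ℝ, g t) = ∫ t : ℝ, g (t + a * Complex.I) := by
  have hB : 0 ≤ B := by
    have h0 := hbd 0 (by simp [le_of_lt ha])
    simp at h0
    nlinarith [norm_nonneg (g 0), Real.exp_pos (0:ℝ)]
  have hIntBound : Integrable (fun t : ℝ => B * Real.exp (-κ * t ^ 2)) := by
    exact (integrable_exp_neg_mul_sq hκ).const_mul B
  have hc1 : Continuous (fun t : ℝ => g t) := by
    rw [continuous_iff_continuousAt]
    intro t
    exact ((hd t (by simp [le_of_lt ha])).continuousAt).comp Complex.continuous_ofReal.continuousAt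
  have hc2 : Continuous (fun t : ℝ => g (t + a * Complex.I)) := by
    rw [continuous_iff_continuousAt]
    intro t
    refine ((hd _ (by simp [le_of_lt ha])).continuousAt).comp ?_
    exact ((Complex.continuous_ofReal).add continuous_const).continuousAt
  have hInt1 : Integrable (fun t : ℝ => g t) := by
    refine hIntBound.mono' hc1.aestronglyMeasurable (Filter.Eventually.of_forall fun t => ?_)
    simpa using hbd t (by simp [le_of_lt ha])
  have hInt2 : Integrable (fun t : ℝ => g (t + a * Complex.I)) := by
    refine hIntBound.mono' hc2.aestronglyMeasurable (Filter.Eventually.of_forall fun t => ?_)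
    have := hbd (t + a * Complex.I) (by simp [le_of_lt ha])
    simpa using this
  -- rectangle identity
  have rect : ∀ T : ℝ, (∫ x in (-T)..T, g x) - (∫ x in (-T)..T, g (x + a * Complex.I))
      = Complex.I • (∫ y in (0:ℝ)..a, g (-T + y * Complex.I))
        - Complex.I • (∫ y in (0:ℝ)..a, g (T + y * Complex.I)) := by
    intro T
    have hz : ((-T : ℝ) : ℂ).re = -T := by simp
    have H : DifferentiableOn ℂ g
        (Set.uIcc ((-T:ℝ):ℂ).re ((T:ℝ) + a * Complex.I).re ×ℂ
          Set.uIcc ((-T:ℝ):ℂ).im ((T:ℝ) + a * Complex.I).im) := by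
      intro ζ hζ
      refine (hd ζ ?_).differentiableWithinAt
      simp only [Complex.mem_reProdIm] at hζ
      have h2 : ζ.im ∈ Set.uIcc ((-T:ℝ):ℂ).im ((T:ℝ) + a * Complex.I).im := hζ.2
      simp only [Complex.add_im, Complex.ofReal_im, Complex.mul_im, Complex.I_im,
        Complex.I_re, Complex.ofReal_re, mul_one, mul_zero, add_zero, zero_add] at h2
      rwa [Set.uIcc_of_le (le_of_lt ha)] at h2
    have E := Complex.integral_boundary_rect_eq_zero_of_differentiableOn g ((-T:ℝ):ℂ)
      ((T:ℝ) + a * Complex.I) H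
    simp only [Complex.add_re, Complex.ofReal_re, Complex.mul_re, Complex.I_re, Complex.I_im,
      Complex.add_im, Complex.ofReal_im, Complex.mul_im, mul_zero, mul_one, zero_mul, sub_zero,
      zero_add, add_zero, zero_sub, neg_zero, Complex.ofReal_zero] at E
    -- E : (∫ x in -T..T, g (x + 0*I)) - (∫ x in -T..T, g (x + a*I)) + I•(∫ y in 0..a, g(T+y*I)) - I•(∫ y in 0..a, g(-T+y*I)) = 0
    have E' : (∫ x in (-T)..T, g x) - (∫ x in (-T)..T, g (x + a * Complex.I))
        + Complex.I • (∫ y in (0:ℝ)..a, g (T + y * Complex.I))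
        - Complex.I • (∫ y in (0:ℝ)..a, g (-T + y * Complex.I)) = 0 := by
      simpa using E
    linear_combination E'
  have h1 : Tendsto (fun T : ℝ => ∫ x in (-T)..T, g x) atTop (nhds (∫ t : ℝ, g t)) :=
    intervalIntegral_tendsto_integral hInt1 tendsto_neg_atTop_atBot tendsto_id
  have h2 : Tendsto (fun T : ℝ => ∫ x in (-T)..T, g (x + a * Complex.I)) atTop
      (nhds (∫ t : ℝ, g (t + a * Complex.I))) :=
    intervalIntegral_tendsto_integral hInt2 tendsto_neg_atTop_atBot tendsto_id
  have h3 : Tendsto (fun T : ℝ => (∫ x in (-T)..T, g x) - (∫ x in (-T)..T, g (x + a * Complex.I)))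
      atTop (nhds ((∫ t : ℝ, g t) - ∫ t : ℝ, g (t + a * Complex.I))) := h1.sub h2
  have hside : ∀ T : ℝ, ‖Complex.I • (∫ y in (0:ℝ)..a, g (-T + y * Complex.I))
        - Complex.I • (∫ y in (0:ℝ)..a, g (T + y * Complex.I))‖
      ≤ 2 * (B * Real.exp (-κ * T ^ 2) * a) := by
    intro T
    have key : ∀ (t : ℝ), t ^ 2 = T ^ 2 → ‖∫ y in (0:ℝ)..a, g (t + y * Complex.I)‖
        ≤ B * Real.exp (-κ * T ^ 2) * |a - 0| := by
      intro t ht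
      refine intervalIntegral.norm_integral_le_of_norm_le_const fun y hy => ?_
      have hyIcc : y ∈ Set.Icc 0 a := by
        rw [Set.uIoc_of_le (le_of_lt ha)] at hy
        exact ⟨le_of_lt hy.1, hy.2⟩
      have hb := hbd (t + y * Complex.I) (by simpa using hyIcc)
      have hre : (t + y * Complex.I).re = t := by simp
      rw [hre, ht] at hb
      simpa using hb
    have k1 := key (-T) (by ring)
    have k2 := key T rfl
    calc ‖Complex.I • (∫ y in (0:ℝ)..a, g (-T + y * Complex.I))
        - Complex.I • (∫ y in (0:ℝ)..a, g (T + y * Complex.I))‖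
        ≤ ‖Complex.I • (∫ y in (0:ℝ)..a, g (-T + y * Complex.I))‖
          + ‖Complex.I • (∫ y in (0:ℝ)..a, g (T + y * Complex.I))‖ := norm_sub_le _ _
      _ ≤ B * Real.exp (-κ * T ^ 2) * |a - 0| + B * Real.exp (-κ * T ^ 2) * |a - 0| := by
          rw [norm_smul, norm_smul]
          simp only [Complex.norm_I, one_mul]
          push_cast at k1 k2 ⊢
          exact add_le_add (by simpa using k1)
            (by simpa using k2)
      _ = 2 * (B * Real.exp (-κ * T ^ 2) * a) := by
          rw [sub_zero, abs_of_pos ha]; ring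
  have h4 : Tendsto (fun T : ℝ => (∫ x in (-T)..T, g x)
      - (∫ x in (-T)..T, g (x + a * Complex.I))) atTop (nhds 0) := by
    have hb0 : Tendsto (fun T : ℝ => 2 * (B * Real.exp (-κ * T ^ 2) * a)) atTop (nhds 0) := by
      have hx : Tendsto (fun T : ℝ => -κ * T ^ 2) atTop atBot := by
        have : Tendsto (fun T : ℝ => T ^ 2) atTop atTop := tendsto_pow_atTop (by norm_num)
        have h'' := tendsto_neg_atBot_iff.mpr (this.const_mul_atTop hκ)
        convert h'' using 2 with T
        ring
      have := (Real.tendsto_exp_atBot.comp hx)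
      have h' : Tendsto (fun T : ℝ => 2 * (B * Real.exp (-κ * T ^ 2) * a)) atTop
          (nhds (2 * (B * 0 * a))) := by
        exact (((this.const_mul B).mul_const a).const_mul 2)
      simpa using h'
    refine squeeze_zero_norm (fun T => ?_) hb0
    rw [rect T]
    exact hside T
  exact sub_eq_zero.mp (tendsto_nhds_unique h3 h4)

lemma strip_bound (C' s m : ℝ) (hC' : 0 < C') (hs : 0 ≤ s) (hsC' : s ≤ C')
    (E : ℂ → ℂ)
    (hdiff : ∀ ζ : ℂ, |ζ.im| ≤ C' → DifferentiableAt ℂ E ζ)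
    (h2 : ∀ ζ : ℂ, |ζ.im| ≤ C' → ‖E ζ‖ ≤ 2)
    (hm : ∀ r : ℝ, ‖E r‖ ≤ m)
    (t : ℝ) :
    ‖E (t + s * Complex.I)‖ ≤ m ^ (1 - s / C') * 2 ^ (s / C') := by
  set f : ℂ → ℂ := fun ξ => E (Complex.I * (C' * ξ) + t) with hf
  have him : ∀ ξ : ℂ, (Complex.I * (C' * ξ) + t).im = C' * ξ.re := by
    intro ξ; simp [Complex.add_im, Complex.mul_im]
  have key : ∀ ξ : ℂ, ξ.re ∈ Set.Icc (0:ℝ) 1 → DifferentiableAt ℂ f ξ := by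
    intro ξ hξ
    have harg : |(Complex.I * (C' * ξ) + t).im| ≤ C' := by
      rw [him]
      rw [abs_of_nonneg (by nlinarith [hξ.1] : (0:ℝ) ≤ C' * ξ.re)]
      nlinarith [hξ.2]
    exact (hdiff _ harg).comp ξ (by fun_prop)
  have hd : DiffContOnCl ℂ f (Complex.HadamardThreeLines.verticalStrip 0 1) := by
    constructor
    · intro ξ hξ
      exact (key ξ ⟨le_of_lt hξ.1, le_of_lt hξ.2⟩).differentiableWithinAt
    · intro ξ hξ
      have hcl : ξ.re ∈ Set.Icc (0:ℝ) 1 := by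
        have := Complex.continuous_re.closure_preimage_subset (Set.Ioo 0 1) hξ
        rwa [closure_Ioo (by norm_num : (0:ℝ) ≠ 1)] at this
      exact (key ξ hcl).continuousAt.continuousWithinAt
  have hB : BddAbove ((norm ∘ f) '' Complex.HadamardThreeLines.verticalClosedStrip 0 1) := by
    refine ⟨2, ?_⟩
    rintro r ⟨ξ, hξ, rfl⟩
    have harg : |(Complex.I * (C' * ξ) + t).im| ≤ C' := by
      rw [him, abs_of_nonneg (by nlinarith [hξ.1] : (0:ℝ) ≤ C' * ξ.re)]
      nlinarith [hξ.2]
    simpa using h2 _ harg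
  have ha : ∀ ξ ∈ Complex.re ⁻¹' {(0:ℝ)}, ‖f ξ‖ ≤ m := by
    intro ξ hξ
    have hre : ξ.re = 0 := hξ
    have : Complex.I * (C' * ξ) + t = ((t - C' * ξ.im : ℝ) : ℂ) := by
      apply Complex.ext <;> simp [hre] <;> ring
    rw [hf]
    simp only [this]
    exact hm _
  have hb : ∀ ξ ∈ Complex.re ⁻¹' {(1:ℝ)}, ‖f ξ‖ ≤ 2 := by
    intro ξ hξ
    have hre : ξ.re = 1 := hξ
    have harg : |(Complex.I * (C' * ξ) + t).im| ≤ C' := by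
      rw [him, hre, mul_one, abs_of_pos hC']
    simpa using h2 _ harg
  have hz : ((s / C' : ℝ) : ℂ) ∈ Complex.HadamardThreeLines.verticalClosedStrip 0 1 := by
    simp only [Complex.HadamardThreeLines.verticalClosedStrip, Set.mem_preimage,
      Complex.ofReal_re, Set.mem_Icc]
    constructor
    · positivity
    · rw [div_le_one hC']; exact hsC'
  have := Complex.HadamardThreeLines.norm_le_interp_of_mem_verticalClosedStrip₀₁' f hz hd hB ha hb
  have hfz : f ((s / C' : ℝ) : ℂ) = E (t + s * Complex.I) := by
    show E (Complex.I * ((C':ℂ) * ((s / C' : ℝ) : ℂ)) + (t:ℂ)) = E ((t:ℂ) + (s:ℂ) * Complex.I)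
    congr 1
    have hC'0 : (C' : ℂ) ≠ 0 := by exact_mod_cast ne_of_gt hC'
    push_cast
    field_simp
    ring
  rw [hfz] at this
  simpa using this

lemma inner_est (C' s ρ ε b m : ℝ) (hC' : 0 < C') (hs : 0 < s) (hsC' : s ≤ C') (hρ : 0 ≤ ρ)
    (hε : 0 < ε) (hb : 0 ≤ b)
    (Ey : ℂ → ℂ)
    (hdiff : ∀ ζ : ℂ, |ζ.im| ≤ C' → DifferentiableAt ℂ Ey ζ)
    (h2 : ∀ ζ : ℂ, |ζ.im| ≤ C' → ‖Ey ζ‖ ≤ 2)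
    (hm' : ∀ r : ℝ, ‖Ey r‖ ≤ m) :
    ‖∫ t : ℝ, Complex.exp (Complex.I * ρ * t) *
        (Complex.exp (-(ε:ℂ) * ((t:ℂ)^2 + (b:ℂ))) * Ey t)‖
      ≤ (Real.exp (-ρ*s) * Real.exp (ε*s^2) * (m ^ (1 - s/C') * 2 ^ (s/C'))) *
          Real.sqrt (π/ε) := by
  have hm0 : 0 ≤ m := le_trans (norm_nonneg _) (hm' 0)
  set g : ℂ → ℂ := fun ζ => Complex.exp (Complex.I * ρ * ζ) *
      (Complex.exp (-(ε:ℂ) * (ζ^2 + (b:ℂ))) * Ey ζ) with hg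
  have habs : ∀ ζ : ℂ, ‖g ζ‖ =
      Real.exp (-ρ * ζ.im) * (Real.exp (-ε * (ζ.re^2 - ζ.im^2 + b)) * ‖Ey ζ‖) := by
    intro ζ
    rw [hg]
    simp only [norm_mul, Complex.norm_exp]
    have r1 : (Complex.I * (ρ:ℂ) * ζ).re = -ρ * ζ.im := by
      simp [Complex.mul_re, Complex.mul_im]
    have r2 : (-(ε:ℂ) * (ζ^2 + (b:ℂ))).re = -ε * (ζ.re^2 - ζ.im^2 + b) := by
      have : (ζ^2).re = ζ.re^2 - ζ.im^2 := by
        rw [sq, Complex.mul_re]; ring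
      simp [Complex.mul_re, Complex.mul_im, this]
    rw [r1, r2]
  have hgd : ∀ ζ : ℂ, ζ.im ∈ Set.Icc 0 s → DifferentiableAt ℂ g ζ := by
    intro ζ hζ
    have d3 : DifferentiableAt ℂ Ey ζ := by
      refine hdiff ζ ?_
      rw [abs_of_nonneg hζ.1]; exact le_trans hζ.2 hsC'
    have d1 : DifferentiableAt ℂ (fun ζ : ℂ => Complex.exp (Complex.I * ρ * ζ)) ζ :=
      (Complex.differentiable_exp.comp ((differentiable_const _).mul differentiable_id)).differentiableAt
    have d2 : DifferentiableAt ℂ (fun ζ : ℂ => Complex.exp (-(ε:ℂ) * (ζ^2 + (b:ℂ)))) ζ := by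
      apply Differentiable.differentiableAt
      apply Complex.differentiable_exp.comp
      apply Differentiable.mul (differentiable_const _)
      exact (differentiable_pow 2).add (differentiable_const _)
    exact d1.mul (d2.mul d3)
  have hgbd : ∀ ζ : ℂ, ζ.im ∈ Set.Icc 0 s →
      ‖g ζ‖ ≤ (2 * Real.exp (ε*s^2)) * Real.exp (-ε * ζ.re^2) := by
    intro ζ hζ
    rw [habs]
    have e1 : Real.exp (-ρ * ζ.im) ≤ 1 := by
      rw [Real.exp_le_one_iff]
      have := hζ.1; nlinarith
    have e2 : Real.exp (-ε * (ζ.re^2 - ζ.im^2 + b)) ≤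
        Real.exp (ε*s^2) * Real.exp (-ε * ζ.re^2) := by
      rw [← Real.exp_add, Real.exp_le_exp]
      have him2 : ζ.im^2 ≤ s^2 := by nlinarith [hζ.1, hζ.2]
      nlinarith
    have e3 : ‖Ey ζ‖ ≤ 2 := by
      refine h2 ζ ?_
      rw [abs_of_nonneg hζ.1]; exact le_trans hζ.2 hsC'
    calc Real.exp (-ρ * ζ.im) * (Real.exp (-ε * (ζ.re^2 - ζ.im^2 + b)) * ‖Ey ζ‖)
        ≤ 1 * ((Real.exp (ε*s^2) * Real.exp (-ε * ζ.re^2)) * 2) := by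
          apply mul_le_mul e1 _ (by positivity) (by norm_num)
          apply mul_le_mul e2 e3 (norm_nonneg _) (by positivity)
      _ = (2 * Real.exp (ε*s^2)) * Real.exp (-ε * ζ.re^2) := by ring
  have shift := contour_shift g s hs hgd hε hgbd
  rw [show (∫ t : ℝ, Complex.exp (Complex.I * ρ * t) *
      (Complex.exp (-(ε:ℂ) * ((t:ℂ)^2 + (b:ℂ))) * Ey t)) = ∫ t : ℝ, g t from rfl, shift]
  set θ := s / C' with hθ
  set c₀ : ℝ := Real.exp (-ρ*s) * Real.exp (ε*s^2) * (m ^ (1-θ) * 2 ^ θ) with hc₀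
  have hptwise : ∀ t : ℝ, ‖g (t + s * Complex.I)‖ ≤ c₀ * Real.exp (-ε * t^2) := by
    intro t
    rw [habs]
    have hre : ((t:ℂ) + s * Complex.I).re = t := by simp
    have him : ((t:ℂ) + s * Complex.I).im = s := by simp
    rw [hre, him]
    have hEb := strip_bound C' s m hC' hs.le hsC' Ey hdiff h2 hm' t
    calc Real.exp (-ρ * s) * (Real.exp (-ε * (t^2 - s^2 + b)) * ‖Ey (t + s*Complex.I)‖)
        ≤ Real.exp (-ρ * s) * ((Real.exp (ε*s^2) * Real.exp (-ε * t^2)) * (m ^ (1-θ) * 2 ^ θ)) := by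
          apply mul_le_mul_of_nonneg_left _ (Real.exp_pos _).le
          apply mul_le_mul _ hEb (norm_nonneg _) (by positivity)
          rw [← Real.exp_add, Real.exp_le_exp]
          nlinarith
      _ = c₀ * Real.exp (-ε * t^2) := by rw [hc₀]; ring
  have hIntBnd : Integrable (fun t : ℝ => c₀ * Real.exp (-ε * t^2)) :=
    (integrable_exp_neg_mul_sq hε).const_mul c₀
  calc ‖∫ t : ℝ, g (t + s * Complex.I)‖
      ≤ ∫ t : ℝ, c₀ * Real.exp (-ε * t^2) := by
        refine norm_integral_le_of_norm_le hIntBnd (Filter.Eventually.of_forall hptwise)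
    _ = c₀ * ∫ t : ℝ, Real.exp (-ε * t^2) := MeasureTheory.integral_const_mul _ _
    _ = c₀ * Real.sqrt (π/ε) := by rw [integral_gaussian]
    _ = (Real.exp (-ρ*s) * Real.exp (ε*s^2) * (m ^ (1-θ) * 2 ^ θ)) * Real.sqrt (π/ε) := by
        rw [hc₀]

lemma isOpen_tube (C : ℝ) : IsOpen (tube C) := by
  have : tube C = (fun z : Fin 4 → ℂ => ∑ i : Fin 4, (z i).im ^ 2) ⁻¹' Set.Iio (C^2) := rfl
  rw [this]
  apply IsOpen.preimage _ isOpen_Iio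
  exact continuous_finset_sum _ fun i _ =>
    ((Complex.continuous_im.comp (continuous_apply i)).pow 2)

lemma coord_abs_le_norm (v : R4) (i : Fin 4) : |v i| ≤ ‖v‖ := by
  rw [EuclideanSpace.norm_eq, ← Real.sqrt_sq_eq_abs]
  apply Real.sqrt_le_sqrt
  have h : (v i)^2 = ‖v i‖^2 := by rw [Real.norm_eq_abs, sq_abs]
  rw [h]
  exact Finset.single_le_sum (f := fun j => ‖v j‖^2) (fun j _ => sq_nonneg _)
    (Finset.mem_univ i)

lemma sum_sq_eq_normsq (v : R4) : ∑ i : Fin 4, (v i)^2 = ‖v‖^2 := by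
  rw [EuclideanSpace.norm_eq, Real.sq_sqrt]
  · simp [Real.norm_eq_abs, sq_abs]
  · exact Finset.sum_nonneg fun i _ => sq_nonneg _

theorem step2
    (C : ℝ) (hC : 0 < C) (D : R4 → ℝ) (DE : (Fin 4 → ℂ) → ℂ)
    (hext : ∀ x : R4, DE (fun i => ((x i : ℝ) : ℂ)) = ((D x : ℝ) : ℂ))
    (hhol : DifferentiableOn ℂ DE (tube C))
    (hbd2 : ∀ z ∈ tube C, ‖DE z‖ ≤ 2)
    (M : ℝ) (hM : 0 < M) (hdecay : ∀ x : R4, |D x| ≤ M / (1 + ‖x‖)^6)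
    (hDcont : Continuous D)
    (s C' : ℝ) (hs : 0 < s) (h2s : 2*s < C') (hC'C : C' < C)
    (ρ ε : ℝ) (hρ : 0 < ρ) (hε0 : 0 < ε)
    (p : R4) (hpρ : ‖p‖ = ρ) (hp : p ≠ 0) :
    ‖∫ x : R4, Complex.exp (Complex.I * ((inner ℝ p x : ℝ) : ℂ)) *
        (((Real.exp (-ε * ‖x‖^2) * D x : ℝ)) : ℂ)‖
      ≤ (Real.exp (-ρ*s) * Real.exp (ε*s^2) * Real.sqrt (π/ε) *
          (2 ^ (s/C') * M ^ (1 - s/C'))) *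
        (∫ y : Fin 3 → ℝ, (1+‖y‖) ^ (-(6*(1 - s/C')))) := by
  have hC'0 : 0 < C' := by linarith
  have hsC' : s ≤ C' := by linarith
  set θ := s / C' with hθdef
  have hθpos : 0 < θ := div_pos hs hC'0
  have hθhalf : θ < 1/2 := by
    rw [hθdef, div_lt_iff₀ hC'0]; linarith
  have hθ1 : θ < 1 := by linarith
  set q : ℝ := 6*(1-θ) with hq
  have hq3 : (3:ℝ) < q := by rw [hq]; nlinarith
  -- the rotation
  set u : R4 := ‖p‖⁻¹ • p with hu'
  have hu : ‖u‖ = 1 := norm_smul_inv_norm hp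
  set e0 : R4 := EuclideanSpace.single (0 : Fin 4) (1:ℝ) with he0'
  have he0 : ‖e0‖ = 1 := by rw [he0', EuclideanSpace.norm_single]; norm_num
  set R := Submodule.reflection (ℝ ∙ (e0 - u))ᗮ with hR'
  have hRe0 : R e0 = u := Submodule.reflection_sub (by rw [he0, hu])
  have hRp : R (ρ • e0) = p := by
    rw [_root_.map_smul, hRe0, hu', smul_smul, ← hpρ, mul_inv_cancel₀ (norm_ne_zero_iff.mpr hp),
      one_smul]
  have hinner : ∀ y : R4, (inner ℝ p (R y) : ℝ) = ρ * y 0 := by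
    intro y
    have h1 : (inner ℝ p (R y) : ℝ) = (inner ℝ (ρ • e0) y : ℝ) := by
      conv_lhs => rw [← hRp]
      exact LinearIsometryEquiv.inner_map_map R (ρ • e0) y
    rw [h1, real_inner_smul_left]
    congr 1
    rw [he0']
    simp [EuclideanSpace.inner_single_left]
  -- sum of squares of u
  have husq : ∑ i : Fin 4, (u i)^2 = 1 := by
    rw [sum_sq_eq_normsq, hu]; norm_num
  -- the rotated integrand
  set G : R4 → ℂ := fun y => Complex.exp (Complex.I * ((ρ * y 0 : ℝ) : ℂ)) *
      (((Real.exp (-ε * ‖y‖^2) * D (R y) : ℝ)) : ℂ) with hG'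
  have hGeq : ∀ y : R4, Complex.exp (Complex.I * ((inner ℝ p (R y) : ℝ) : ℂ)) *
      (((Real.exp (-ε * ‖R y‖^2) * D (R y) : ℝ)) : ℂ) = G y := by
    intro y
    rw [hG', hinner y, R.norm_map]
  have hrot : (∫ x : R4, Complex.exp (Complex.I * ((inner ℝ p x : ℝ) : ℂ)) *
      (((Real.exp (-ε * ‖x‖^2) * D x : ℝ)) : ℂ)) = ∫ y : R4, G y := by
    rw [← R.measurePreserving.integral_comp
      R.toHomeomorph.toMeasurableEquiv.measurableEmbedding
      (fun x => Complex.exp (Complex.I * ((inner ℝ p x : ℝ) : ℂ)) *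
        (((Real.exp (-ε * ‖x‖^2) * D x : ℝ)) : ℂ))]
    exact integral_congr_ae (Filter.Eventually.of_forall fun y => hGeq y)
  -- integrability of G
  have habs1 : ∀ r : ℝ, ‖Complex.exp (Complex.I * ((r:ℝ):ℂ))‖ = 1 := by
    intro r
    rw [mul_comm]
    exact Complex.norm_exp_ofReal_mul_I r
  have hGbd : ∀ y : R4, ‖G y‖ ≤ M * (1+‖y‖) ^ (-(6:ℝ)) := by
    intro y
    have hconv : M * (1+‖y‖) ^ (-(6:ℝ)) = M / (1+‖y‖)^6 := by
      rw [Real.rpow_neg (by positivity), div_eq_mul_inv]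
      congr 2
      rw [← Real.rpow_natCast (1+‖y‖) 6]
      norm_num
    rw [hconv, hG', norm_mul, habs1, one_mul,
      Complex.norm_real, Real.norm_eq_abs, abs_mul, abs_of_pos (Real.exp_pos _)]
    calc Real.exp (-ε * ‖y‖^2) * |D (R y)| ≤ 1 * (M / (1 + ‖R y‖)^6) := by
          apply mul_le_mul _ (hdecay (R y)) (abs_nonneg _) (by norm_num)
          rw [Real.exp_le_one_iff]
          nlinarith [sq_nonneg ‖y‖]
      _ = M / (1+‖y‖)^6 := by rw [one_mul, R.norm_map]
  have hGcont : Continuous G := by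
    apply Continuous.mul
    · apply Complex.continuous_exp.comp
      apply continuous_const.mul
      apply Complex.continuous_ofReal.comp
      exact continuous_const.mul (by fun_prop : Continuous fun y : R4 => y 0)
    · apply Complex.continuous_ofReal.comp
      apply Continuous.mul
      · exact Real.continuous_exp.comp (continuous_const.mul (continuous_norm.pow 2))
      · exact hDcont.comp R.continuous
  have hfinrank4 : ((Module.finrank ℝ R4 : ℝ)) < 6 := by
    rw [finrank_euclideanSpace]
    simp
    norm_num
  have hGint : Integrable G := by
    refine ((integrable_one_add_norm hfinrank4).const_mul M).mono'
      hGcont.aestronglyMeasurable (Filter.Eventually.of_forall hGbd)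
  -- transfer to pi coordinates and split
  set eqE := (MeasurableEquiv.toLp 2 (Fin 4 → ℝ)).symm with heqE
  set e4 := MeasurableEquiv.piFinSuccAbove (fun _ : Fin 4 => ℝ) 0 with he4
  have hMP1 : MeasurePreserving eqE.symm :=
    (EuclideanSpace.volume_preserving_symm_measurableEquiv_toLp (Fin 4)).symm eqE
  have hMP2 : MeasurePreserving e4.symm :=
    (volume_preserving_piFinSuccAbove (fun _ : Fin 4 => ℝ) 0).symm e4
  have htrans1 : (∫ y : R4, G y) = ∫ w : Fin 4 → ℝ, G (eqE.symm w) :=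
    (hMP1.integral_comp eqE.symm.measurableEmbedding G).symm
  have htrans2 : (∫ w : Fin 4 → ℝ, G (eqE.symm w))
      = ∫ z : ℝ × (Fin 3 → ℝ), G (eqE.symm (e4.symm z)) :=
    (hMP2.integral_comp e4.symm.measurableEmbedding _).symm
  have hHint : Integrable (fun z : ℝ × (Fin 3 → ℝ) => G (eqE.symm (e4.symm z))) := by
    have h1 : Integrable (G ∘ eqE.symm) :=
      (hMP1.integrable_comp_emb eqE.symm.measurableEmbedding).mpr hGint
    exact (hMP2.integrable_comp_emb e4.symm.measurableEmbedding).mpr h1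
  have hfub : (∫ z : ℝ × (Fin 3 → ℝ), G (eqE.symm (e4.symm z)))
      = ∫ y' : Fin 3 → ℝ, ∫ t : ℝ, G (eqE.symm (e4.symm (t, y'))) := by
    have h2 : Integrable (fun z : ℝ × (Fin 3 → ℝ) => G (eqE.symm (e4.symm z)))
        ((volume : Measure ℝ).prod (volume : Measure (Fin 3 → ℝ))) := by
      rwa [← Measure.volume_eq_prod]
    have := MeasureTheory.integral_prod_symm
      (fun z : ℝ × (Fin 3 → ℝ) => G (eqE.symm (e4.symm z))) h2
    rwa [← Measure.volume_eq_prod] at this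
  have he4symm : ∀ (t : ℝ) (y' : Fin 3 → ℝ), e4.symm (t, y') = Fin.cons t y' := by
    intro t y'
    have h1 : e4.symm (t, y') = Fin.insertNth 0 t y' := rfl
    rw [h1, Fin.insertNth_zero']
  have heqcoord : ∀ (v : Fin 4 → ℝ) (i : Fin 4), (eqE.symm v) i = v i := fun v i => rfl
  -- the key bound for each y'
  have key : ∀ y' : Fin 3 → ℝ, ‖∫ t : ℝ, G (eqE.symm (e4.symm (t, y')))‖ ≤
      (Real.exp (-ρ*s) * Real.exp (ε*s^2) * Real.sqrt (π/ε) * (2 ^ θ * M ^ (1-θ)))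
        * (1+‖y'‖) ^ (-q) := by
    intro y'
    set v0 : R4 := eqE.symm (Fin.cons (0:ℝ) y') with hv0
    set w0 : R4 := R v0 with hw0
    set b : ℝ := ∑ k : Fin 3, (y' k)^2 with hb'
    have hb : 0 ≤ b := Finset.sum_nonneg fun k _ => sq_nonneg _
    set m : ℝ := M / (1 + ‖y'‖)^6 with hm'
    set Ey : ℂ → ℂ := fun ζ => DE (fun i => ((w0 i : ℝ):ℂ) + ζ * ((u i : ℝ):ℂ)) with hEy
    have hcons : ∀ t : ℝ, eqE.symm (Fin.cons t y') = v0 + t • e0 := by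
      intro t
      ext i
      rw [heqcoord]
      have hrhs : (v0 + t • e0) i = v0 i + t * e0 i := by
        rw [PiLp.add_apply, PiLp.smul_apply, smul_eq_mul]
      rw [hrhs, hv0, heqcoord, he0']
      induction i using Fin.cases with
      | zero => simp [EuclideanSpace.single_apply]
      | succ k => simp [EuclideanSpace.single_apply, Fin.succ_ne_zero]
    have hcoordR : ∀ t : ℝ, R (eqE.symm (Fin.cons t y')) = w0 + t • u := by
      intro t
      rw [hcons t, map_add, _root_.map_smul, hRe0, hw0]
    have hreal : ∀ t : ℝ, Ey ((t:ℝ):ℂ) = ((D (R (eqE.symm (Fin.cons t y'))) : ℝ) : ℂ) := by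
      intro t
      rw [hEy]
      have harg : (fun i => ((w0 i : ℝ):ℂ) + ((t:ℝ):ℂ) * ((u i : ℝ):ℂ)) =
          (fun i => (((w0 + t • u) i : ℝ) : ℂ)) := by
        funext i
        rw [PiLp.add_apply, PiLp.smul_apply, smul_eq_mul]
        push_cast
        simp only [PiLp.smul_apply, smul_eq_mul, hu', Complex.ofReal_mul, Complex.ofReal_inv]
      show DE (fun i => ((w0 i : ℝ):ℂ) + ((t:ℝ):ℂ) * ((u i : ℝ):ℂ)) = _
      rw [harg, hext (w0 + t • u), hcoordR]
    have htube : ∀ ζ : ℂ, |ζ.im| ≤ C' →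
        (fun i => ((w0 i : ℝ):ℂ) + ζ * ((u i : ℝ):ℂ)) ∈ tube C := by
      intro ζ hζ
      have him : ∀ i : Fin 4, (((w0 i : ℝ):ℂ) + ζ * ((u i : ℝ):ℂ)).im = ζ.im * u i := by
        intro i
        simp [Complex.add_im, Complex.mul_im]
      show (∑ i : Fin 4, (((w0 i : ℝ):ℂ) + ζ * ((u i : ℝ):ℂ)).im ^ 2) < C^2
      have hsum : (∑ i : Fin 4, (((w0 i : ℝ):ℂ) + ζ * ((u i : ℝ):ℂ)).im ^ 2)
          = ζ.im^2 := by
        calc (∑ i : Fin 4, (((w0 i : ℝ):ℂ) + ζ * ((u i : ℝ):ℂ)).im ^ 2)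
            = ∑ i : Fin 4, ζ.im^2 * (u i)^2 := by
              apply Finset.sum_congr rfl
              intro i _
              rw [him i]
              ring
          _ = ζ.im^2 * ∑ i : Fin 4, (u i)^2 := by rw [Finset.mul_sum]
          _ = ζ.im^2 := by rw [husq, mul_one]
      rw [hsum]
      have h1 : ζ.im^2 ≤ C'^2 := by
        rw [← sq_abs]
        apply pow_le_pow_left₀ (abs_nonneg _) hζ
      have h2 : C'^2 < C^2 := by
        apply pow_lt_pow_left₀ hC'C hC'0.le
        norm_num
      linarith
    have hdf : ∀ ζ : ℂ, |ζ.im| ≤ C' → DifferentiableAt ℂ Ey ζ := by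
      intro ζ hζ
      have hDE : DifferentiableAt ℂ DE (fun i => ((w0 i : ℝ):ℂ) + ζ * ((u i : ℝ):ℂ)) :=
        hhol.differentiableAt ((isOpen_tube C).mem_nhds (htube ζ hζ))
      apply hDE.comp
      apply differentiableAt_pi.mpr
      intro i
      exact (differentiableAt_const _).add (differentiableAt_id.mul_const _)
    have h2y : ∀ ζ : ℂ, |ζ.im| ≤ C' → ‖Ey ζ‖ ≤ 2 := fun ζ h =>
      hbd2 _ (htube ζ h)
    have hmy : ∀ r : ℝ, ‖Ey r‖ ≤ m := by
      intro r
      rw [hreal r, Complex.norm_real, Real.norm_eq_abs]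
      refine le_trans (hdecay _) ?_
      rw [hm']
      have hnormle : ‖y'‖ ≤ ‖R (eqE.symm (Fin.cons r y'))‖ := by
        rw [R.norm_map]
        refine (pi_norm_le_iff_of_nonneg (norm_nonneg _)).mpr ?_
        intro k
        have hco : y' k = (eqE.symm (Fin.cons r y')) k.succ := by
          rw [heqcoord]
          simp
        rw [Real.norm_eq_abs, hco]
        exact coord_abs_le_norm _ _
      gcongr
    -- identify the inner ℝ integrand
    have hint_eq : ∀ t : ℝ, G (eqE.symm (e4.symm (t, y'))) =
        Complex.exp (Complex.I * ρ * t) *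
          (Complex.exp (-(ε:ℂ) * ((t:ℂ)^2 + (b:ℂ))) * Ey t) := by
      intro t
      rw [he4symm t y']
      simp only [hG']
      have hnorm2 : ‖eqE.symm (Fin.cons t y')‖^2 = t^2 + b := by
        rw [← sum_sq_eq_normsq, Fin.sum_univ_succ]
        simp only [heqcoord, Fin.cons_zero, Fin.cons_succ]
        try rw [hb']
      have h0 : (eqE.symm (Fin.cons t y')) 0 = t := by rw [heqcoord]; simp
      rw [h0, hnorm2, hreal t]
      push_cast [Complex.ofReal_exp]
      ring
    have hin := inner_est C' s ρ ε b m hC'0 hs hsC' hρ.le hε0 hb Ey hdf h2y hmy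
    have hmpow : m ^ (1-θ) = M ^ (1-θ) * (1+‖y'‖) ^ (-q) := by
      have h1 : ((1+‖y'‖):ℝ)^(6:ℕ) = (1+‖y'‖) ^ ((6:ℕ):ℝ) := (Real.rpow_natCast _ 6).symm
      have hqe : -((((6:ℕ)):ℝ)*(1-θ)) = -q := by rw [hq]; push_cast; ring
      rw [hm', Real.div_rpow hM.le (by positivity), h1, ← Real.rpow_mul (by positivity),
        div_eq_mul_inv, ← Real.rpow_neg (by positivity), hqe]
    calc ‖∫ t : ℝ, G (eqE.symm (e4.symm (t, y')))‖
        = ‖∫ t : ℝ, Complex.exp (Complex.I * ρ * t) *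
            (Complex.exp (-(ε:ℂ) * ((t:ℂ)^2 + (b:ℂ))) * Ey t)‖ := by
          congr 1
          exact integral_congr_ae (Filter.Eventually.of_forall hint_eq)
      _ ≤ (Real.exp (-ρ*s) * Real.exp (ε*s^2) * (m ^ (1 - s/C') * 2 ^ (s/C'))) *
            Real.sqrt (π/ε) := hin
      _ = (Real.exp (-ρ*s) * Real.exp (ε*s^2) * Real.sqrt (π/ε) * (2 ^ θ * M ^ (1-θ)))
            * (1+‖y'‖) ^ (-q) := by
          rw [← hθdef, hmpow]
          ring
  -- final assembly
  have hfinrank3 : ((Module.finrank ℝ (Fin 3 → ℝ) : ℝ)) < q := by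
    rw [Module.finrank_fintype_fun_eq_card]
    simp
    linarith
  have hJint : Integrable (fun y : Fin 3 → ℝ => (1+‖y‖) ^ (-q)) :=
    integrable_one_add_norm hfinrank3
  calc ‖∫ x : R4, Complex.exp (Complex.I * ((inner ℝ p x : ℝ) : ℂ)) *
        (((Real.exp (-ε * ‖x‖^2) * D x : ℝ)) : ℂ)‖
      = ‖∫ y' : Fin 3 → ℝ, ∫ t : ℝ, G (eqE.symm (e4.symm (t, y')))‖ := by
        rw [hrot, htrans1, htrans2, hfub]
    _ ≤ ∫ y' : Fin 3 → ℝ,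
          (Real.exp (-ρ*s) * Real.exp (ε*s^2) * Real.sqrt (π/ε) * (2 ^ θ * M ^ (1-θ)))
            * (1+‖y'‖) ^ (-q) := by
        refine norm_integral_le_of_norm_le (hJint.const_mul _)
          (Filter.Eventually.of_forall key)
    _ = (Real.exp (-ρ*s) * Real.exp (ε*s^2) * Real.sqrt (π/ε) * (2 ^ θ * M ^ (1-θ)))
          * ∫ y' : Fin 3 → ℝ, (1+‖y'‖) ^ (-q) := integral_const_mul _ _
    _ = (Real.exp (-ρ*s) * Real.exp (ε*s^2) * Real.sqrt (π/ε) *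
          (2 ^ (s/C') * M ^ (1 - s/C'))) *
        (∫ y : Fin 3 → ℝ, (1+‖y‖) ^ (-(6*(1 - s/C')))) := by
        rw [← hθdef, ← hq]

lemma one_sub_exp_le (v γ : ℝ) (hv : 0 ≤ v) (hγ0 : 0 < γ) (hγ1 : γ ≤ 1) :
    1 - Real.exp (-v) ≤ v ^ γ := by
  rcases le_or_gt v 1 with h|h
  · have h1 : 1 - Real.exp (-v) ≤ v := by nlinarith [Real.add_one_le_exp (-v)]
    calc 1 - Real.exp (-v) ≤ v := h1
      _ = v ^ (1:ℝ) := (Real.rpow_one v).symm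
      _ ≤ v ^ γ := by
          rcases eq_or_lt_of_le hv with h0|h0
          · rw [← h0, Real.zero_rpow one_ne_zero, Real.zero_rpow (ne_of_gt hγ0)]
          · exact Real.rpow_le_rpow_of_exponent_ge h0 h hγ1
  · calc 1 - Real.exp (-v) ≤ 1 := by nlinarith [Real.exp_pos (-v)]
      _ = 1 ^ γ := (Real.one_rpow γ).symm
      _ ≤ v ^ γ := Real.rpow_le_rpow zero_le_one h.le hγ0.le


theorem exponential_decay_from_tube_holomorphy
    (C : ℝ) (hC : 0 < C) (D : R4 → ℝ) (DE : (Fin 4 → ℂ) → ℂ)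
    (hext : ∀ x : R4, DE (fun i => ((x i : ℝ) : ℂ)) = ((D x : ℝ) : ℂ))
    (hhol : DifferentiableOn ℂ DE (tube C))
    (hbd2 : ∀ z ∈ tube C, ‖DE z‖ ≤ 2)
    (M : ℝ) (hM : 0 < M) (hdecay : ∀ x : R4, |D x| ≤ M / (1 + ‖x‖)^6)
    (c : ℝ) (hc0 : 0 < c) (hcC : c < C) :
    ∃ A : ℝ, ∀ p : R4,
      ‖∫ x : R4, Complex.exp (Complex.I * ((inner ℝ p x : ℝ) : ℂ)) * ((D x : ℝ) : ℂ)‖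
        ≤ A * Real.exp (-c * ‖p‖ / 3) := by
  -- continuity of D
  have hmemtube : ∀ x : R4, (fun i => ((x i : ℝ) : ℂ)) ∈ tube C := by
    intro x
    show (∑ i : Fin 4, ((x i : ℝ) : ℂ).im ^ 2) < C^2
    simp only [Complex.ofReal_im]
    simp only [ne_eq, OfNat.ofNat_ne_zero, not_false_eq_true, zero_pow, Finset.sum_const_zero]
    exact pow_pos hC 2
  have hDcont : Continuous D := by
    have hcont : Continuous fun x : R4 => DE (fun i => ((x i : ℝ) : ℂ)) := by
      rw [continuous_iff_continuousAt]
      intro x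
      have h1 : ContinuousAt DE (fun i => ((x i : ℝ) : ℂ)) :=
        (hhol.differentiableAt ((isOpen_tube C).mem_nhds (hmemtube x))).continuousAt
      refine h1.comp ?_
      apply Continuous.continuousAt
      apply continuous_pi
      intro i
      exact Complex.continuous_ofReal.comp (by fun_prop : Continuous fun x : R4 => x i)
    have hcont2 : Continuous fun x : R4 => ((D x : ℝ) : ℂ) := by
      have heq : (fun x : R4 => DE (fun i => ((x i : ℝ) : ℂ)))
          = fun x : R4 => ((D x : ℝ) : ℂ) := funext fun x => hext x
      rwa [heq] at hcont
    have hconre : Continuous fun x : R4 => (((D x : ℝ) : ℂ)).re :=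
      Complex.continuous_re.comp hcont2
    simpa using hconre
  -- constants
  set γ : ℝ := c / (c + 3*(C - c)/4) with hγdef
  have hden : 0 < c + 3*(C-c)/4 := by linarith
  have hγ0 : 0 < γ := div_pos hc0 hden
  have hγ1 : γ < 1 := by rw [hγdef, div_lt_one hden]; linarith
  set s : ℝ := c/2 + (C-c)/8 with hsdef
  have hs0 : 0 < s := by rw [hsdef]; linarith
  have hsC2 : s < C/2 := by rw [hsdef]; linarith
  set C' : ℝ := s + C/2 with hC'def
  have hC'C : C' < C := by rw [hC'def]; linarith
  have h2s : 2*s < C' := by rw [hC'def]; linarith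
  have hC'0 : 0 < C' := by rw [hC'def]; linarith
  have hsγ : -s + c/(6*γ) = -c/3 := by
    rw [hγdef, hsdef]
    field_simp
    ring
  -- integrability facts
  have hrank4 : ((Module.finrank ℝ R4 : ℝ)) = 4 := by
    rw [finrank_euclideanSpace]; simp
  have hJ1int : Integrable (fun x : R4 => (1+‖x‖) ^ (-(6 - 2*γ))) :=
    integrable_one_add_norm (by rw [hrank4]; linarith)
  set J1 : ℝ := ∫ x : R4, (1+‖x‖) ^ (-(6 - 2*γ)) with hJ1def
  have hJ1pos : 0 ≤ J1 :=
    integral_nonneg fun x => Real.rpow_nonneg (by positivity) _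
  set J3 : ℝ := ∫ y : Fin 3 → ℝ, (1+‖y‖) ^ (-(6*(1 - s/C'))) with hJ3def
  have hJ3pos : 0 ≤ J3 :=
    integral_nonneg fun y => Real.rpow_nonneg (by positivity) _
  have hb6 : ∀ x : R4, M * (1+‖x‖) ^ (-(6:ℝ)) = M / (1+‖x‖)^6 := by
    intro x
    rw [Real.rpow_neg (by positivity), div_eq_mul_inv]
    congr 2
    rw [← Real.rpow_natCast (1+‖x‖) 6]
    norm_num
  have hI0int : Integrable (fun x : R4 => M / (1+‖x‖)^6) := by
    have h1 := (integrable_one_add_norm (E := R4) (μ := volume) (r := 6)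
      (by rw [hrank4]; norm_num)).const_mul M
    exact h1.congr (Filter.Eventually.of_forall fun x => hb6 x)
  set I0 : ℝ := ∫ x : R4, M / (1+‖x‖)^6 with hI0def
  have hI0pos : 0 ≤ I0 := integral_nonneg fun x => by positivity
  set K1 : ℝ := M * J1 with hK1def
  set K2 : ℝ := Real.sqrt π * 2 ^ (s/C') * Real.exp (s^2) * M ^ (1-(s/C')) * J3 with hK2def
  have hK1pos : 0 ≤ K1 := by positivity
  have hK2pos : 0 ≤ K2 := by positivity
  refine ⟨I0 + K1 + K2, fun p => ?_⟩
  -- general facts about the integrand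
  have habs1 : ∀ r : ℝ, ‖Complex.exp (Complex.I * ((r:ℝ):ℂ))‖ = 1 := by
    intro r
    rw [mul_comm]
    exact Complex.norm_exp_ofReal_mul_I r
  have hinnercont : Continuous fun x : R4 => (inner ℝ p x : ℝ) :=
    continuous_const.inner continuous_id
  have hFcont : Continuous fun x : R4 =>
      Complex.exp (Complex.I * ((inner ℝ p x : ℝ) : ℂ)) * ((D x : ℝ) : ℂ) := by
    apply Continuous.mul
    · exact Complex.continuous_exp.comp
        (continuous_const.mul (Complex.continuous_ofReal.comp hinnercont))
    · exact Complex.continuous_ofReal.comp hDcont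
  have hFbd : ∀ x : R4, ‖Complex.exp (Complex.I * ((inner ℝ p x : ℝ) : ℂ)) * ((D x : ℝ) : ℂ)‖
      ≤ M / (1+‖x‖)^6 := by
    intro x
    rw [norm_mul, habs1, one_mul,
      Complex.norm_real, Real.norm_eq_abs]
    exact hdecay x
  have hFint : Integrable (fun x : R4 =>
      Complex.exp (Complex.I * ((inner ℝ p x : ℝ) : ℂ)) * ((D x : ℝ) : ℂ)) :=
    hI0int.mono' hFcont.aestronglyMeasurable (Filter.Eventually.of_forall hFbd)
  have hLHSI0 : ‖∫ x : R4,
      Complex.exp (Complex.I * ((inner ℝ p x : ℝ) : ℂ)) * ((D x : ℝ) : ℂ)‖ ≤ I0 := by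
    exact norm_integral_le_of_norm_le hI0int (Filter.Eventually.of_forall hFbd)
  by_cases hp : p = 0
  · rw [hp]
    simp only [norm_zero, mul_zero, zero_div, Real.exp_zero, mul_one]
    calc ‖∫ x : R4,
        Complex.exp (Complex.I * ((inner ℝ (0:R4) x : ℝ) : ℂ)) * ((D x : ℝ) : ℂ)‖ ≤ I0 := by
          have := hLHSI0
          rwa [hp] at this
      _ ≤ I0 + K1 + K2 := by linarith
  · -- main case
    set ρ : ℝ := ‖p‖ with hρdef
    have hρ0 : 0 < ρ := by rw [hρdef]; exact norm_pos_iff.mpr hp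
    set ε : ℝ := Real.exp (-(c*ρ)/(3*γ)) with hεdef
    have hε0 : 0 < ε := Real.exp_pos _
    have hε1 : ε ≤ 1 := by
      rw [hεdef, Real.exp_le_one_iff]
      apply div_nonpos_of_nonpos_of_nonneg
      · nlinarith
      · linarith
    -- step 1 : comparison with the regularized transform
    have hFεcont : Continuous fun x : R4 =>
        Complex.exp (Complex.I * ((inner ℝ p x : ℝ) : ℂ)) *
          (((Real.exp (-ε * ‖x‖^2) * D x : ℝ)) : ℂ) := by
      apply Continuous.mul
      · exact Complex.continuous_exp.comp
          (continuous_const.mul (Complex.continuous_ofReal.comp hinnercont))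
      · refine Complex.continuous_ofReal.comp (Continuous.mul ?_ hDcont)
        exact Real.continuous_exp.comp (continuous_const.mul (continuous_norm.pow 2))
    have hFεbd : ∀ x : R4, ‖Complex.exp (Complex.I * ((inner ℝ p x : ℝ) : ℂ)) *
        (((Real.exp (-ε * ‖x‖^2) * D x : ℝ)) : ℂ)‖ ≤ M / (1+‖x‖)^6 := by
      intro x
      rw [norm_mul, habs1, one_mul,
        Complex.norm_real, Real.norm_eq_abs, abs_mul, abs_of_pos (Real.exp_pos _)]
      calc Real.exp (-ε * ‖x‖^2) * |D x| ≤ 1 * |D x| := by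
            apply mul_le_mul_of_nonneg_right _ (abs_nonneg _)
            rw [Real.exp_le_one_iff]
            nlinarith [sq_nonneg ‖x‖]
        _ = |D x| := one_mul _
        _ ≤ M / (1+‖x‖)^6 := hdecay x
    have hFεint : Integrable (fun x : R4 =>
        Complex.exp (Complex.I * ((inner ℝ p x : ℝ) : ℂ)) *
          (((Real.exp (-ε * ‖x‖^2) * D x : ℝ)) : ℂ)) :=
      hI0int.mono' hFεcont.aestronglyMeasurable (Filter.Eventually.of_forall hFεbd)
    have hεγ : ε ^ γ = Real.exp (-c * ρ / 3) := by
      rw [hεdef, ← Real.exp_mul]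
      congr 1
      field_simp
    have hsubbd : ∀ x : R4,
        ‖Complex.exp (Complex.I * ((inner ℝ p x : ℝ) : ℂ)) * ((D x : ℝ) : ℂ) -
          Complex.exp (Complex.I * ((inner ℝ p x : ℝ) : ℂ)) *
            (((Real.exp (-ε * ‖x‖^2) * D x : ℝ)) : ℂ)‖
          ≤ (M * Real.exp (-c * ρ / 3)) * (1+‖x‖) ^ (-(6 - 2*γ)) := by
      intro x
      have hfactor : Complex.exp (Complex.I * ((inner ℝ p x : ℝ) : ℂ)) * ((D x : ℝ) : ℂ) -
          Complex.exp (Complex.I * ((inner ℝ p x : ℝ) : ℂ)) *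
            (((Real.exp (-ε * ‖x‖^2) * D x : ℝ)) : ℂ)
          = Complex.exp (Complex.I * ((inner ℝ p x : ℝ) : ℂ)) *
            (((D x - Real.exp (-ε * ‖x‖^2) * D x : ℝ)) : ℂ) := by
        push_cast
        ring
      rw [hfactor, norm_mul, habs1, one_mul,
        Complex.norm_real, Real.norm_eq_abs]
      have h1 : |D x - Real.exp (-ε * ‖x‖^2) * D x|
          = (1 - Real.exp (-ε * ‖x‖^2)) * |D x| := by
        rw [show D x - Real.exp (-ε * ‖x‖^2) * D x = (1 - Real.exp (-ε * ‖x‖^2)) * D x by ring,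
          abs_mul]
        congr 1
        rw [abs_of_nonneg]
        have : Real.exp (-ε * ‖x‖^2) ≤ 1 := by
          rw [Real.exp_le_one_iff]; nlinarith [sq_nonneg ‖x‖]
        linarith
      rw [h1]
      have h2 : (1 - Real.exp (-ε * ‖x‖^2)) ≤ (ε * ‖x‖^2) ^ γ := by
        have := one_sub_exp_le (ε * ‖x‖^2) γ (by positivity) hγ0 hγ1.le
        rwa [show -(ε * ‖x‖^2) = -ε * ‖x‖^2 by ring] at this
      have h3 : (ε * ‖x‖^2) ^ γ = ε ^ γ * (‖x‖^2) ^ γ :=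
        Real.mul_rpow hε0.le (sq_nonneg _)
      have h4 : ((‖x‖^2 : ℝ)) ^ γ ≤ ((1+‖x‖)^2 : ℝ) ^ γ := by
        apply Real.rpow_le_rpow (sq_nonneg _) _ hγ0.le
        nlinarith [norm_nonneg x]
      have h5 : (((1+‖x‖)^2 : ℝ)) ^ γ = (1+‖x‖) ^ (2*γ) := by
        rw [← Real.rpow_natCast (1+‖x‖) 2, ← Real.rpow_mul (by positivity)]
        norm_num
      calc (1 - Real.exp (-ε * ‖x‖^2)) * |D x|
          ≤ (ε ^ γ * (1+‖x‖) ^ (2*γ)) * (M / (1+‖x‖)^6) := by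
            apply mul_le_mul _ (hdecay x) (abs_nonneg _) (by positivity)
            rw [← h5]
            calc (1 - Real.exp (-ε * ‖x‖^2)) ≤ (ε * ‖x‖^2) ^ γ := h2
              _ = ε ^ γ * (‖x‖^2) ^ γ := h3
              _ ≤ ε ^ γ * ((1+‖x‖)^2) ^ γ := by
                  apply mul_le_mul_of_nonneg_left h4 (Real.rpow_nonneg hε0.le _)
        _ = (M * Real.exp (-c * ρ / 3)) * (1+‖x‖) ^ (-(6 - 2*γ)) := by
            rw [hεγ, show M / (1+‖x‖)^6 = M * (1+‖x‖) ^ (-(6:ℝ)) from (hb6 x).symm,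
              show Real.exp (-c * ρ / 3) * (1+‖x‖) ^ (2*γ) * (M * (1+‖x‖) ^ (-(6:ℝ)))
                = (M * Real.exp (-c * ρ / 3)) * ((1+‖x‖) ^ (2*γ) * (1+‖x‖) ^ (-(6:ℝ)))
                from by ring,
              ← Real.rpow_add (by positivity),
              show 2*γ + -(6:ℝ) = -(6 - 2*γ) from by ring]
    have hstep1 : ‖
        (∫ x : R4, Complex.exp (Complex.I * ((inner ℝ p x : ℝ) : ℂ)) * ((D x : ℝ) : ℂ)) -
         (∫ x : R4, Complex.exp (Complex.I * ((inner ℝ p x : ℝ) : ℂ)) *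
            (((Real.exp (-ε * ‖x‖^2) * D x : ℝ)) : ℂ))‖
        ≤ K1 * Real.exp (-c * ρ / 3) := by
      rw [← integral_sub hFint hFεint]
      calc ‖∫ x : R4, (Complex.exp (Complex.I * ((inner ℝ p x : ℝ) : ℂ)) * ((D x : ℝ) : ℂ) -
            Complex.exp (Complex.I * ((inner ℝ p x : ℝ) : ℂ)) *
              (((Real.exp (-ε * ‖x‖^2) * D x : ℝ)) : ℂ))‖
          ≤ ∫ x : R4, (M * Real.exp (-c * ρ / 3)) * (1+‖x‖) ^ (-(6 - 2*γ)) :=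
            norm_integral_le_of_norm_le (hJ1int.const_mul _)
              (Filter.Eventually.of_forall hsubbd)
        _ = (M * Real.exp (-c * ρ / 3)) * J1 := integral_const_mul _ _
        _ = K1 * Real.exp (-c * ρ / 3) := by rw [hK1def]; ring
    -- step 2
    have hstep2 := step2 C hC D DE hext hhol hbd2 M hM hdecay hDcont s C' hs0 h2s hC'C
      ρ ε hρ0 hε0 p hρdef.symm hp
    have hsqrt : Real.sqrt (π/ε) = Real.sqrt π * Real.exp ((c*ρ)/(3*γ)/2) := by
      have h1 : π/ε = π * Real.exp ((c*ρ)/(3*γ)) := by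
        rw [hεdef, div_eq_mul_inv, ← Real.exp_neg]
        congr 1
        ring
      rw [h1, Real.sqrt_mul pi_pos.le, ← Real.exp_half]
    have hγne : γ ≠ 0 := ne_of_gt hγ0
    have hphase : -ρ*s + (c*ρ)/(3*γ)/2 = -c*ρ/3 := by
      have h6γ : (c*ρ)/(3*γ)/2 = ρ * (c/(6*γ)) := by
        field_simp
        ring
      calc -ρ*s + (c*ρ)/(3*γ)/2 = ρ * (-s + c/(6*γ)) := by rw [h6γ]; ring
        _ = ρ * (-c/3) := by rw [hsγ]
        _ = -c*ρ/3 := by ring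
    have hQ : (Real.exp (-ρ*s) * Real.exp (ε*s^2) * Real.sqrt (π/ε) *
          (2 ^ (s/C') * M ^ (1 - s/C'))) * J3
        ≤ K2 * Real.exp (-c * ρ / 3) := by
      rw [hsqrt]
      have hee : Real.exp (ε*s^2) ≤ Real.exp (s^2) := by
        rw [Real.exp_le_exp]
        nlinarith [sq_nonneg s]
      calc (Real.exp (-ρ*s) * Real.exp (ε*s^2) *
            (Real.sqrt π * Real.exp ((c*ρ)/(3*γ)/2)) *
            (2 ^ (s/C') * M ^ (1 - s/C'))) * J3
          = (Real.exp (-ρ*s) * Real.exp ((c*ρ)/(3*γ)/2)) *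
            (Real.exp (ε*s^2) * (Real.sqrt π * (2 ^ (s/C') * M ^ (1 - s/C')) * J3)) := by
            ring
        _ = Real.exp (-c*ρ/3) *
            (Real.exp (ε*s^2) * (Real.sqrt π * (2 ^ (s/C') * M ^ (1 - s/C')) * J3)) := by
            rw [← Real.exp_add, hphase]
        _ ≤ Real.exp (-c*ρ/3) *
            (Real.exp (s^2) * (Real.sqrt π * (2 ^ (s/C') * M ^ (1 - s/C')) * J3)) := by
            have hfac : 0 ≤ Real.sqrt π * (2 ^ (s/C') * M ^ (1 - s/C')) * J3 := by
              positivity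
            apply mul_le_mul_of_nonneg_left _ (Real.exp_pos _).le
            exact mul_le_mul_of_nonneg_right hee hfac
        _ = K2 * Real.exp (-c * ρ / 3) := by
            rw [hK2def]
            ring
    have htri : ‖∫ x : R4,
        Complex.exp (Complex.I * ((inner ℝ p x : ℝ) : ℂ)) * ((D x : ℝ) : ℂ)‖
        ≤ ‖
          (∫ x : R4, Complex.exp (Complex.I * ((inner ℝ p x : ℝ) : ℂ)) * ((D x : ℝ) : ℂ)) -
           (∫ x : R4, Complex.exp (Complex.I * ((inner ℝ p x : ℝ) : ℂ)) *
              (((Real.exp (-ε * ‖x‖^2) * D x : ℝ)) : ℂ))‖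
          + ‖∫ x : R4, Complex.exp (Complex.I * ((inner ℝ p x : ℝ) : ℂ)) *
              (((Real.exp (-ε * ‖x‖^2) * D x : ℝ)) : ℂ)‖ := by
      have h := norm_add_le
        ((∫ x : R4, Complex.exp (Complex.I * ((inner ℝ p x : ℝ) : ℂ)) * ((D x : ℝ) : ℂ)) -
         (∫ x : R4, Complex.exp (Complex.I * ((inner ℝ p x : ℝ) : ℂ)) *
            (((Real.exp (-ε * ‖x‖^2) * D x : ℝ)) : ℂ)))
        (∫ x : R4, Complex.exp (Complex.I * ((inner ℝ p x : ℝ) : ℂ)) *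
            (((Real.exp (-ε * ‖x‖^2) * D x : ℝ)) : ℂ))
      simpa using h
    calc ‖∫ x : R4,
        Complex.exp (Complex.I * ((inner ℝ p x : ℝ) : ℂ)) * ((D x : ℝ) : ℂ)‖
        ≤ ‖
          (∫ x : R4, Complex.exp (Complex.I * ((inner ℝ p x : ℝ) : ℂ)) * ((D x : ℝ) : ℂ)) -
           (∫ x : R4, Complex.exp (Complex.I * ((inner ℝ p x : ℝ) : ℂ)) *
              (((Real.exp (-ε * ‖x‖^2) * D x : ℝ)) : ℂ))‖
          + ‖∫ x : R4, Complex.exp (Complex.I * ((inner ℝ p x : ℝ) : ℂ)) *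
              (((Real.exp (-ε * ‖x‖^2) * D x : ℝ)) : ℂ)‖ := htri
      _ ≤ K1 * Real.exp (-c * ρ / 3) + K2 * Real.exp (-c * ρ / 3) :=
          add_le_add hstep1 (le_trans hstep2 hQ)
      _ ≤ (I0 + K1 + K2) * Real.exp (-c * ρ / 3) := by
          nlinarith [Real.exp_pos (-c * ρ / 3)]
end
end

section
/- (U(1) decoupling / photon decoupling identity for Parke-Taylor factors) For n ≥ 3 distinct points z₁,…,z_n ∈ ℂ, the sum over all cyclic insertions of z₁ into the ordered sequence (z₂,…,z_n) of Parke-Taylor factors vanishes: ∑_{j=2}^{n} PT(z₂,…,z_j, z₁, z_{j+1},…,z_n) = 0. -/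
noncomputable section

/-- The Parke-Taylor factor of a cyclic word of points. -/
def PT {m : ℕ} [NeZero m] (z : Fin m → ℂ) : ℂ := (∏ i : Fin m, (z i - z (i + 1)))⁻¹

namespace PTaux

variable {n : ℕ} (z : Fin (n + 3) → ℂ)

/-- The inserted word. -/
def w (j : Fin (n + 2)) : Fin (n + 3) → ℂ :=
  Fin.insertNth j.succ (z 0) (fun i : Fin (n + 2) => z i.succ)

lemma w_apply (j : Fin (n + 2)) (i : Fin (n + 3)) :
    w z j i =
      if h : (i : ℕ) ≤ (j : ℕ) then z ⟨(i : ℕ) + 1, by have := j.isLt; omega⟩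
      else if h2 : (i : ℕ) = (j : ℕ) + 1 then z 0
      else z ⟨(i : ℕ), i.isLt⟩ := by
  have hj := j.isLt
  have hi := i.isLt
  rcases lt_trichotomy (i : ℕ) ((j : ℕ) + 1) with h | h | h
  · rw [dif_pos (by omega)]
    have hs : (j.succ).succAbove ⟨(i : ℕ), by omega⟩ = i := by
      rw [Fin.succAbove_of_castSucc_lt]
      · ext; simp
      · rw [Fin.lt_def]; simp only [Fin.coe_castSucc, Fin.val_succ]; omega
    have key := Fin.insertNth_apply_succAbove (α := fun _ : Fin (n + 3) => ℂ) j.succ (z 0)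
      (fun i : Fin (n + 2) => z i.succ) ⟨(i : ℕ), by omega⟩
    simp only [hs] at key
    simp only [w, key]
    exact congrArg z (Fin.ext (by simp))
  · rw [dif_neg (by omega), dif_pos h]
    have hij : i = j.succ := by ext; simpa using h
    rw [hij]
    simp only [w, Fin.insertNth_apply_same]
  · rw [dif_neg (by omega), dif_neg (by omega)]
    have hlt : (i : ℕ) - 1 < n + 2 := by omega
    have hs : (j.succ).succAbove ⟨(i : ℕ) - 1, hlt⟩ = i := by
      rw [Fin.succAbove_of_le_castSucc]
      · ext; simp only [Fin.val_succ]; omega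
      · rw [Fin.le_def]; simp only [Fin.coe_castSucc, Fin.val_succ]; omega
    have key := Fin.insertNth_apply_succAbove (α := fun _ : Fin (n + 3) => ℂ) j.succ (z 0)
      (fun i : Fin (n + 2) => z i.succ) ⟨(i : ℕ) - 1, hlt⟩
    simp only [hs] at key
    simp only [w, key]
    exact congrArg z (Fin.ext (by simp only [Fin.val_succ]; omega))

lemma psi_val (j k : Fin (n + 2)) :
    (((Fin.castSucc j).succAbove k : Fin (n + 3)) : ℕ) =
      if (k : ℕ) < (j : ℕ) then (k : ℕ) else (k : ℕ) + 1 := by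
  rcases lt_or_ge (k : ℕ) (j : ℕ) with h | h
  · rw [Fin.succAbove_of_castSucc_lt _ _ (Fin.castSucc_lt_castSucc_iff.mpr (Fin.lt_def.mpr h)),
      if_pos h]
    simp
  · rw [Fin.succAbove_of_le_castSucc _ _ (Fin.castSucc_le_castSucc_iff.mpr (Fin.le_def.mpr h)),
      if_neg (by omega)]
    simp

lemma val_add_one (i : Fin (n + 3)) : ((i + 1 : Fin (n + 3)) : ℕ) = ((i : ℕ) + 1) % (n + 3) := by
  rw [Fin.add_def]; simp

lemma val_add_one' (i : Fin (n + 2)) : ((i + 1 : Fin (n + 2)) : ℕ) = ((i : ℕ) + 1) % (n + 2) := by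
  rw [Fin.add_def]; simp

lemma prod_eq (j : Fin (n + 2)) :
    ∏ i : Fin (n + 3), (w z j i - w z j (i + 1)) =
      (z j.succ - z 0) * ((z 0 - z (j + 1).succ) *
        ∏ k ∈ Finset.univ.erase j, (z k.succ - z (k + 1).succ)) := by
  rw [Fin.prod_univ_succAbove _ (Fin.castSucc j)]
  have hj := j.isLt
  congr 1
  · -- factor at castSucc j
    have h1 : w z j (Fin.castSucc j) = z j.succ := by
      rw [w_apply, dif_pos (by simp)]
      exact congrArg z (Fin.ext (by simp))
    have h2 : w z j (Fin.castSucc j + 1) = z 0 := by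
      have hv : ((Fin.castSucc j + 1 : Fin (n + 3)) : ℕ) = (j : ℕ) + 1 := by
        rw [val_add_one]; simp only [Fin.coe_castSucc]; exact Nat.mod_eq_of_lt (by omega)
      rw [w_apply, dif_neg (by rw [hv]; omega), dif_pos (by rw [hv])]
    rw [h1, h2]
  · rw [← Finset.mul_prod_erase _ _ (Finset.mem_univ j)]
    congr 1
    · -- factor at ψ j = j.succ
      have hpsi : (Fin.castSucc j).succAbove j = j.succ := by
        ext; rw [psi_val]; simp
      rw [hpsi]
      have h1 : w z j (j.succ) = z 0 := by
        rw [w_apply, dif_neg (by simp), dif_pos (by simp)]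
      have h2 : w z j (j.succ + 1) = z (j + 1).succ := by
        rcases Nat.lt_or_ge (j : ℕ) (n + 1) with hc | hc
        · have hv : ((j.succ + 1 : Fin (n + 3)) : ℕ) = (j : ℕ) + 2 := by
            rw [val_add_one]; simp only [Fin.val_succ]; exact Nat.mod_eq_of_lt (by omega)
          have hw : ((j + 1 : Fin (n + 2)) : ℕ) = (j : ℕ) + 1 := by
            rw [val_add_one']; exact Nat.mod_eq_of_lt (by omega)
          rw [w_apply, dif_neg (by rw [hv]; omega), dif_neg (by rw [hv]; omega)]
          exact congrArg z (Fin.ext (by simp only [hv, Fin.val_succ, hw]))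
        · have hj2 : (j : ℕ) = n + 1 := by omega
          have hv : ((j.succ + 1 : Fin (n + 3)) : ℕ) = 0 := by
            rw [val_add_one]; simp only [Fin.val_succ, hj2]
            simp [show n + 1 + 1 + 1 = n + 3 from rfl]
          have hw : ((j + 1 : Fin (n + 2)) : ℕ) = 0 := by
            rw [val_add_one']; simp [hj2, show n + 1 + 1 = n + 2 from rfl]
          rw [w_apply, dif_pos (by rw [hv]; omega)]
          exact congrArg z (Fin.ext (by simp only [hv, Fin.val_succ, hw]))
      rw [h1, h2]
    · apply Finset.prod_congr rfl
      intro k hk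
      have hkj : (k : ℕ) ≠ (j : ℕ) := fun hc => (Finset.mem_erase.mp hk).1 (Fin.ext hc)
      have hk2 := k.isLt
      have h1 : w z j ((Fin.castSucc j).succAbove k) = z k.succ := by
        rcases lt_or_ge (k : ℕ) (j : ℕ) with h | h
        · have hps : (((Fin.castSucc j).succAbove k : Fin (n + 3)) : ℕ) = (k : ℕ) := by
            rw [psi_val, if_pos h]
          rw [w_apply, dif_pos (by rw [hps]; omega)]
          exact congrArg z (Fin.ext (by simp only [hps, Fin.val_succ]))
        · have h' : (j : ℕ) < (k : ℕ) := by omega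
          have hps : (((Fin.castSucc j).succAbove k : Fin (n + 3)) : ℕ) = (k : ℕ) + 1 := by
            rw [psi_val, if_neg (by omega)]
          rw [w_apply, dif_neg (by rw [hps]; omega), dif_neg (by rw [hps]; omega)]
          exact congrArg z (Fin.ext (by simp only [hps, Fin.val_succ]))
      have h2 : w z j ((Fin.castSucc j).succAbove k + 1) = z (k + 1).succ := by
        rcases lt_or_ge (k : ℕ) (j : ℕ) with h | h
        · have hv : (((Fin.castSucc j).succAbove k + 1 : Fin (n + 3)) : ℕ) = (k : ℕ) + 1 := by
            rw [val_add_one, psi_val, if_pos h]; exact Nat.mod_eq_of_lt (by omega)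
          have hw : ((k + 1 : Fin (n + 2)) : ℕ) = (k : ℕ) + 1 := by
            rw [val_add_one']; exact Nat.mod_eq_of_lt (by omega)
          rw [w_apply, dif_pos (by rw [hv]; omega)]
          exact congrArg z (Fin.ext (by simp only [hv, Fin.val_succ, hw]))
        · have h' : (j : ℕ) < (k : ℕ) := by omega
          rcases Nat.lt_or_ge (k : ℕ) (n + 1) with hc | hc
          · have hv : (((Fin.castSucc j).succAbove k + 1 : Fin (n + 3)) : ℕ) = (k : ℕ) + 2 := by
              rw [val_add_one, psi_val, if_neg (by omega)]; exact Nat.mod_eq_of_lt (by omega)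
            have hw : ((k + 1 : Fin (n + 2)) : ℕ) = (k : ℕ) + 1 := by
              rw [val_add_one']; exact Nat.mod_eq_of_lt (by omega)
            rw [w_apply, dif_neg (by rw [hv]; omega), dif_neg (by rw [hv]; omega)]
            exact congrArg z (Fin.ext (by simp only [hv, Fin.val_succ, hw]))
          · have hk3 : (k : ℕ) = n + 1 := by omega
            have hv : (((Fin.castSucc j).succAbove k + 1 : Fin (n + 3)) : ℕ) = 0 := by
              rw [val_add_one, psi_val, if_neg (by omega), hk3]
              simp [show n + 1 + 1 + 1 = n + 3 from rfl]
            have hw : ((k + 1 : Fin (n + 2)) : ℕ) = 0 := by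
              rw [val_add_one', hk3]; simp [show n + 1 + 1 = n + 2 from rfl]
            rw [w_apply, dif_pos (by rw [hv]; omega)]
            exact congrArg z (Fin.ext (by simp only [hv, Fin.val_succ, hw]))
      rw [h1, h2]

end PTaux

/-- U(1) decoupling: the sum over all insertions of `z 0` into the ordered sequence
`(z 1, …, z (n-1))` of Parke-Taylor factors vanishes. -/
theorem parke_taylor_U1_decoupling (n : ℕ) (z : Fin (n + 3) → ℂ)
    (hz : Function.Injective z) :
    ∑ j : Fin (n + 2), PT (Fin.insertNth j.succ (z 0) (fun i : Fin (n + 2) => z i.succ)) = 0 := by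
  have hzero : ∀ k : Fin (n + 2), z k.succ - z 0 ≠ 0 := by
    intro k
    refine sub_ne_zero.mpr fun h => ?_
    exact Fin.succ_ne_zero k (hz h)
  have hadj : ∀ k : Fin (n + 2), z k.succ - z (k + 1).succ ≠ 0 := by
    intro k
    refine sub_ne_zero.mpr fun h => ?_
    have h2 : k = k + 1 := Fin.succ_injective _ (hz h)
    have h4 := left_eq_add.mp h2
    simpa using congrArg Fin.val h4
  set B := ∏ k : Fin (n + 2), (z k.succ - z (k + 1).succ) with hB
  have key : ∀ j : Fin (n + 2),
      PT (Fin.insertNth j.succ (z 0) (fun i : Fin (n + 2) => z i.succ)) =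
        B⁻¹ * ((z j.succ - z 0)⁻¹ - (z (j + 1).succ - z 0)⁻¹) := by
    intro j
    have hPT : PT (Fin.insertNth j.succ (z 0) (fun i : Fin (n + 2) => z i.succ)) =
        (∏ i : Fin (n + 3), (PTaux.w z j i - PTaux.w z j (i + 1)))⁻¹ := rfl
    rw [hPT, PTaux.prod_eq z j]
    have hP : (z j.succ - z (j + 1).succ) *
        ∏ k ∈ Finset.univ.erase j, (z k.succ - z (k + 1).succ) = B :=
      Finset.mul_prod_erase Finset.univ
        (fun k : Fin (n + 2) => z k.succ - z (k + 1).succ) (Finset.mem_univ j)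
    have hPne : (∏ k ∈ Finset.univ.erase j, (z k.succ - z (k + 1).succ)) ≠ 0 :=
      Finset.prod_ne_zero_iff.mpr fun k _ => hadj k
    have hA := hzero j
    have hD := hzero (j + 1)
    have hE : z 0 - z (j + 1).succ ≠ 0 := sub_ne_zero.mpr (sub_ne_zero.mp hD).symm
    rw [← hP]
    have hC : z j.succ - z (j + 1).succ = (z j.succ - z 0) + (z 0 - z (j + 1).succ) := by ring
    have hDE : z (j + 1).succ - z 0 = -(z 0 - z (j + 1).succ) := by ring
    have hCne : (z j.succ - z 0) + (z 0 - z (j + 1).succ) ≠ 0 := hC ▸ hadj j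
    rw [hC, hDE]
    generalize hA1 : z j.succ - z 0 = A at hA hCne ⊢
    generalize hE1 : z 0 - z (j + 1).succ = E at hE hCne ⊢
    generalize hP1 : (∏ k ∈ Finset.univ.erase j, (z k.succ - z (k + 1).succ)) = P at hPne ⊢
    have h3 : A⁻¹ - (-E)⁻¹ = (A + E) * (A⁻¹ * E⁻¹) := by
      rw [inv_neg, sub_neg_eq_add]
      field_simp
      ring
    rw [h3, mul_inv, mul_inv, mul_inv]
    have h4 : (A + E)⁻¹ * P⁻¹ * ((A + E) * (A⁻¹ * E⁻¹)) =
        ((A + E)⁻¹ * (A + E)) * (P⁻¹ * (A⁻¹ * E⁻¹)) := by ring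
    rw [h4, inv_mul_cancel₀ hCne, one_mul]
    ring
  rw [Finset.sum_congr rfl fun j _ => key j, ← Finset.mul_sum]
  have hsum : ∑ j : Fin (n + 2), ((z j.succ - z 0)⁻¹ - (z (j + 1).succ - z 0)⁻¹) = 0 := by
    rw [Finset.sum_sub_distrib, sub_eq_zero]
    exact (Fintype.sum_equiv (Equiv.addRight 1) _ _ (fun j => rfl)).symm
  rw [hsum, mul_zero]
end
end

section
/- Let f : ℝ⁴ → ℝ be given by f(x) = log(1 − 2(X·x)/(x·x) + c/(x·x)) for constants X ∈ ℝ⁴, c ∈ ℝ. Then for |x| sufficiently large, Δ²f(x) = O(|x|^{-6}): there exist R, M > 0 such that |Δ²f(x)| ≤ M|x|^{-6} for all |x| ≥ R. -/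
open MeasureTheory Real
open Topology

noncomputable section

/-- The flat Laplacian on ℝ⁴: sum of pure second derivatives in the coordinate directions. -/
def laplacian (f : R4 → ℝ) (x : R4) : ℝ :=
  ∑ i : Fin 4,
    iteratedFDeriv ℝ 2 f x ![EuclideanSpace.single i (1:ℝ), EuclideanSpace.single i (1:ℝ)]

set_option maxHeartbeats 1000000

lemma lap_pt (f : R4 → ℝ) (D : R4 → (R4 →L[ℝ] ℝ)) (E' : R4 →L[ℝ] (R4 →L[ℝ] ℝ))
    (U : Set R4) (hU : IsOpen U) (x : R4) (hx : x ∈ U)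
    (hD : ∀ y ∈ U, HasFDerivAt f (D y) y)
    (hE : HasFDerivAt D E' x) (v : R4) :
    iteratedFDeriv ℝ 2 f x ![v, v] = E' v v := by
  rw [iteratedFDeriv_two_apply]
  have h1 : fderiv ℝ f =ᶠ[𝓝 x] D :=
    Filter.eventually_of_mem (hU.mem_nhds hx) fun y hy => (hD y hy).fderiv
  have h2 : fderiv ℝ (fderiv ℝ f) x = fderiv ℝ D x := h1.fderiv_eq
  rw [h2, hE.fderiv]
  simp

lemma hasFDerivAt_radial {h : ℝ → ℝ} {h' : ℝ} (p x : R4)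
    (hd : HasDerivAt h h' (‖x - p‖^2)) :
    HasFDerivAt (fun z : R4 => h (‖z - p‖^2)) ((2 * h') • innerSL ℝ (x - p)) x := by
  have h0 : HasFDerivAt (fun z : R4 => ‖z - p‖^2) (2 • (innerSL ℝ (x - p))) x := by
    simpa using ((hasFDerivAt_id x).sub_const p).norm_sq
  have h1 := hd.comp_hasFDerivAt x h0
  refine h1.congr_fderiv ?_
  ext w
  simp [two_smul]
  ring

def J : R4 →L[ℝ] (R4 →L[ℝ] ℝ) := innerSL ℝ

lemma J_apply (y v : R4) : J y v = (inner ℝ y v : ℝ) := rfl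

lemma hasFDerivAt_inner_sub (p x : R4) :
    HasFDerivAt (fun z : R4 => innerSL ℝ (z - p)) J x := by
  have := (J.hasFDerivAt (x := x - p)).comp x
    ((hasFDerivAt_id x).sub_const p)
  rw [ContinuousLinearMap.comp_id] at this
  exact this

lemma sumsq (y : R4) : ∑ i : Fin 4, (y i)^2 = ‖y‖^2 := by
  rw [EuclideanSpace.norm_eq, Real.sq_sqrt (by positivity)]
  simp [Real.norm_eq_abs, sq_abs]

lemma lap_pair (f : R4 → ℝ) {h h' h'' k k' k'' : ℝ → ℝ} {S T : Set ℝ}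
    (hS : IsOpen S) (hT : IsOpen T)
    (hd1 : ∀ s ∈ S, HasDerivAt h (h' s) s) (hd2 : ∀ s ∈ S, HasDerivAt h' (h'' s) s)
    (he1 : ∀ s ∈ T, HasDerivAt k (k' s) s) (he2 : ∀ s ∈ T, HasDerivAt k' (k'' s) s)
    (p : R4)
    (hfeq : ∀ y : R4, ‖y - p‖^2 ∈ S → ‖y‖^2 ∈ T → f y = h (‖y - p‖^2) + k (‖y‖^2))
    (x : R4) (hxS : ‖x - p‖^2 ∈ S) (hxT : ‖x‖^2 ∈ T) :
    laplacian f x =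
      (4 * ‖x - p‖^2 * h'' (‖x - p‖^2) + 8 * h' (‖x - p‖^2))
      + (4 * ‖x‖^2 * k'' (‖x‖^2) + 8 * k' (‖x‖^2)) := by
  set U : Set R4 := ((fun y : R4 => ‖y - p‖^2) ⁻¹' S) ∩ ((fun y : R4 => ‖y‖^2) ⁻¹' T) with hUdef
  have hU : IsOpen U :=
    ((hS.preimage (by continuity)).inter (hT.preimage (by continuity)))
  have hxU : x ∈ U := ⟨hxS, hxT⟩
  set D : R4 → (R4 →L[ℝ] ℝ) := fun y =>
    (2 * h' (‖y - p‖^2)) • innerSL ℝ (y - p) + (2 * k' (‖y‖^2)) • innerSL ℝ y with hDdef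
  have hD : ∀ y ∈ U, HasFDerivAt f (D y) y := by
    intro y hy
    have H1 : HasFDerivAt (fun z : R4 => h (‖z - p‖^2))
        ((2 * h' (‖y - p‖^2)) • innerSL ℝ (y - p)) y := hasFDerivAt_radial p y (hd1 _ hy.1)
    have H2 : HasFDerivAt (fun z : R4 => k (‖z‖^2))
        ((2 * k' (‖y‖^2)) • innerSL ℝ y) y := by
      have := hasFDerivAt_radial (0 : R4) y (by simpa using he1 _ hy.2)
      simpa using this
    refine (H1.add H2).congr_of_eventuallyEq ?_
    filter_upwards [hU.mem_nhds hy] with z hz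
    exact hfeq z hz.1 hz.2
  set E : R4 →L[ℝ] (R4 →L[ℝ] ℝ) :=
    ((2 * h' (‖x - p‖^2)) • J
      + ((2 * (2 * h'' (‖x - p‖^2))) • innerSL ℝ (x - p)).smulRight (innerSL ℝ (x - p)))
    + ((2 * k' (‖x‖^2)) • J
      + ((2 * (2 * k'' (‖x‖^2))) • innerSL ℝ x).smulRight (innerSL ℝ x)) with hEdef
  have hE : HasFDerivAt D E x := by
    have hc1 : HasFDerivAt (fun y : R4 => 2 * h' (‖y - p‖^2))
        ((2 * (2 * h'' (‖x - p‖^2))) • innerSL ℝ (x - p)) x :=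
      hasFDerivAt_radial p x ((hd2 _ hxS).const_mul 2)
    have hc2 : HasFDerivAt (fun y : R4 => 2 * k' (‖y‖^2))
        ((2 * (2 * k'' (‖x‖^2))) • innerSL ℝ x) x := by
      have := hasFDerivAt_radial (0 : R4) x (by simpa using (he2 _ hxT).const_mul 2)
      simpa using this
    have hL1 : HasFDerivAt (fun y : R4 => innerSL ℝ (y - p))
        J x := hasFDerivAt_inner_sub p x
    have hL2 : HasFDerivAt (fun y : R4 => innerSL ℝ y)
        J x := by
      have := hasFDerivAt_inner_sub 0 x
      simpa using this
    have := (hc1.smul hL1).add (hc2.smul hL2)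
    exact this
  have key : ∀ i : Fin 4, iteratedFDeriv ℝ 2 f x
      ![EuclideanSpace.single i (1:ℝ), EuclideanSpace.single i (1:ℝ)]
      = (2 * h' (‖x - p‖^2) + 4 * h'' (‖x - p‖^2) * ((x - p) i)^2)
        + (2 * k' (‖x‖^2) + 4 * k'' (‖x‖^2) * (x i)^2) := by
    intro i
    rw [lap_pt f D E U hU x hxU hD hE _]
    have hvv : (inner ℝ (EuclideanSpace.single i (1:ℝ)) (EuclideanSpace.single i (1:ℝ)) : ℝ) = 1 := by
      simp [EuclideanSpace.inner_single_right]
    have h1 : (inner ℝ (x - p) (EuclideanSpace.single i (1:ℝ)) : ℝ) = (x - p) i := by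
      simp [EuclideanSpace.inner_single_right]
    have h2 : (inner ℝ x (EuclideanSpace.single i (1:ℝ)) : ℝ) = x i := by
      simp [EuclideanSpace.inner_single_right]
    rw [hEdef]
    simp only [ContinuousLinearMap.add_apply, ContinuousLinearMap.smul_apply,
      ContinuousLinearMap.smulRight_apply, innerSL_apply_apply, J_apply, smul_eq_mul, hvv, h1, h2]
    ring
  unfold laplacian
  rw [Finset.sum_congr rfl fun i _ => key i]
  simp only [Finset.sum_add_distrib, Finset.sum_const, Finset.card_univ,
    Fintype.card_fin, nsmul_eq_mul]
  simp only [← Finset.mul_sum]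
  rw [sumsq, sumsq]
  ring

section derivs
variable (a : ℝ)

lemma d_log {s : ℝ} (hs : -a < s) :
    HasDerivAt (fun t => Real.log (t + a)) ((s + a)⁻¹) s := by
  have h0 : s + a ≠ 0 := by intro h; linarith
  have := ((hasDerivAt_id s).add_const a).log h0
  simpa [one_div] using this

lemma d_log' {s : ℝ} (hs : -a < s) :
    HasDerivAt (fun t : ℝ => (t + a)⁻¹) (-(((s + a)^2)⁻¹)) s := by
  have h0 : s + a ≠ 0 := by intro h; linarith
  have := ((hasDerivAt_id s).add_const a).inv h0
  refine this.congr_deriv ?_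
  simp only [id_eq]
  field_simp

lemma d_nlog {s : ℝ} (hs : (0:ℝ) < s) :
    HasDerivAt (fun t => -Real.log t) (-s⁻¹) s := (Real.hasDerivAt_log hs.ne').neg

lemma d_nlog' {s : ℝ} (hs : (0:ℝ) < s) :
    HasDerivAt (fun t : ℝ => -t⁻¹) ((s^2)⁻¹) s := by
  have := (hasDerivAt_inv hs.ne').neg
  exact this.congr_deriv (by simp)

lemma d_h1 {s : ℝ} (hs : -a < s) :
    HasDerivAt (fun t : ℝ => (4*t + 8*a)/(t + a)^2) ((-4*s - 12*a)/(s + a)^3) s := by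
  have h0 : s + a ≠ 0 := by intro h; linarith
  have hnum : HasDerivAt (fun t : ℝ => 4*t + 8*a) 4 s := by
    simpa using ((hasDerivAt_id s).const_mul (4:ℝ)).add_const (8*a)
  have hden : HasDerivAt (fun t : ℝ => (t + a)^2) (2*(s+a)) s := by
    have := ((hasDerivAt_id s).add_const a).pow 2
    exact this.congr_deriv (by simp)
  have := hnum.div hden (pow_ne_zero 2 h0)
  refine this.congr_deriv ?_
  field_simp
  ring

lemma d_h1' {s : ℝ} (hs : -a < s) :
    HasDerivAt (fun t : ℝ => (-4*t - 12*a)/(t + a)^3) ((8*s + 32*a)/(s + a)^4) s := by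
  have h0 : s + a ≠ 0 := by intro h; linarith
  have hnum : HasDerivAt (fun t : ℝ => -4*t - 12*a) (-4) s := by
    simpa using ((hasDerivAt_id s).const_mul (-4:ℝ)).add_const (-(12*a))
  have hden : HasDerivAt (fun t : ℝ => (t + a)^3) (3*(s+a)^2) s := by
    have := ((hasDerivAt_id s).add_const a).pow 3
    exact this.congr_deriv (by simp)
  have := hnum.div hden (pow_ne_zero 3 h0)
  refine this.congr_deriv ?_
  field_simp
  ring

lemma d_k1 {s : ℝ} (hs : (0:ℝ) < s) :
    HasDerivAt (fun t : ℝ => -4/t) (4/s^2) s := by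
  have := (hasDerivAt_const s (-4:ℝ)).div (hasDerivAt_id s) hs.ne'
  refine this.congr_deriv ?_
  simp only [id_eq]
  field_simp
  ring

lemma d_k1' {s : ℝ} (hs : (0:ℝ) < s) :
    HasDerivAt (fun t : ℝ => 4/t^2) (-8/s^3) s := by
  have hden : HasDerivAt (fun t : ℝ => t^2) (2*s) s := by
    exact ((hasDerivAt_id s).pow 2).congr_deriv (by simp)
  have := (hasDerivAt_const s (4:ℝ)).div hden (pow_ne_zero 2 hs.ne')
  refine this.congr_deriv ?_
  field_simp
  ring

end derivs

theorem bilaplacian_log_expansion_decay (X : R4) (c R₀ : ℝ) (hR₀ : 0 < R₀)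
    (hpos : ∀ x : R4, R₀ ≤ ‖x‖ →
      0 < 1 - 2 * (inner ℝ X x : ℝ) / ‖x‖^2 + c / ‖x‖^2) :
    ∃ R M : ℝ, 0 < R ∧ 0 < M ∧ ∀ x : R4, R ≤ ‖x‖ →
      |laplacian (laplacian
          (fun y => Real.log (1 - 2 * (inner ℝ X y : ℝ) / ‖y‖^2 + c / ‖y‖^2))) x|
        ≤ M / ‖x‖^6 := by
  set a := c - ‖X‖^2 with ha
  set f₀ : R4 → ℝ := fun y => Real.log (1 - 2 * (inner ℝ X y : ℝ) / ‖y‖^2 + c / ‖y‖^2) with hf₀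
  have hfeq0 : ∀ y : R4, ‖y - X‖^2 ∈ Set.Ioi (-a) → ‖y‖^2 ∈ Set.Ioi (0:ℝ) →
      f₀ y = Real.log (‖y - X‖^2 + a) + -Real.log (‖y‖^2) := by
    intro y h1 h2
    have h1' : -a < ‖y - X‖^2 := h1
    have h2' : (0:ℝ) < ‖y‖^2 := h2
    have hnum : (0:ℝ) < ‖y - X‖^2 + a := by linarith
    have hA : 1 - 2 * (inner ℝ X y : ℝ) / ‖y‖^2 + c / ‖y‖^2 = (‖y - X‖^2 + a)/‖y‖^2 := by
      rw [norm_sub_sq_real, real_inner_comm y X, ha]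
      have hy0 : ‖y‖ ≠ 0 := fun h => by simp [h] at h2'
      field_simp
      ring
    show Real.log (1 - 2 * (inner ℝ X y : ℝ) / ‖y‖^2 + c / ‖y‖^2) = _
    rw [hA, Real.log_div hnum.ne' h2'.ne', sub_eq_add_neg]
  have glap : ∀ y : R4, ‖y - X‖^2 ∈ Set.Ioi (-a) → ‖y‖^2 ∈ Set.Ioi (0:ℝ) →
      laplacian f₀ y = (4*‖y - X‖^2 + 8*a)/(‖y - X‖^2 + a)^2 + -4/‖y‖^2 := by
    intro y h1 h2
    have h1' : -a < ‖y - X‖^2 := h1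
    have h2' : (0:ℝ) < ‖y‖^2 := h2
    have hnum : (0:ℝ) < ‖y - X‖^2 + a := by linarith
    rw [lap_pair f₀ (h := fun s => Real.log (s + a)) (h' := fun s => (s + a)⁻¹)
      (h'' := fun s => -(((s + a)^2)⁻¹)) (k := fun s => -Real.log s) (k' := fun s => -s⁻¹)
      (k'' := fun s => (s^2)⁻¹) (S := Set.Ioi (-a)) (T := Set.Ioi 0) isOpen_Ioi isOpen_Ioi
      (fun s hs => d_log a hs) (fun s hs => d_log' a hs)
      (fun s hs => d_nlog hs) (fun s hs => d_nlog' hs) X hfeq0 y h1 h2]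
    field_simp
    ring
  have final : ∀ x : R4, ‖x - X‖^2 ∈ Set.Ioi (-a) → ‖x‖^2 ∈ Set.Ioi (0:ℝ) →
      laplacian (laplacian f₀) x = -96*a^2/((‖x - X‖^2 + a)^4) := by
    intro x h1 h2
    have h1' : -a < ‖x - X‖^2 := h1
    have h2' : (0:ℝ) < ‖x‖^2 := h2
    have hnum : (0:ℝ) < ‖x - X‖^2 + a := by linarith
    rw [lap_pair (laplacian f₀) (h := fun s => (4*s + 8*a)/(s + a)^2)
      (h' := fun s => (-4*s - 12*a)/(s + a)^3) (h'' := fun s => (8*s + 32*a)/(s + a)^4)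
      (k := fun s => -4/s) (k' := fun s => 4/s^2) (k'' := fun s => -8/s^3)
      (S := Set.Ioi (-a)) (T := Set.Ioi 0) isOpen_Ioi isOpen_Ioi
      (fun s hs => d_h1 a hs) (fun s hs => d_h1' a hs)
      (fun s hs => d_k1 hs) (fun s hs => d_k1' hs) X glap x h1 h2]
    field_simp
    ring
  refine ⟨max (R₀+1) (4*‖X‖+2*|a|+2), 1536*a^2+1, ?_, by positivity, ?_⟩
  · exact lt_of_lt_of_le (by linarith) (le_max_left _ _)
  intro x hx
  have hN1 : (1:ℝ) ≤ ‖x‖ := by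
    have := le_trans (le_max_right _ _) hx
    nlinarith [norm_nonneg X, abs_nonneg a]
  have hge : 4*‖X‖+2*|a|+2 ≤ ‖x‖ := le_trans (le_max_right _ _) hx
  have hkey : ‖x‖^2/2 ≤ ‖x - X‖^2 + a := by
    have h1 : ‖x‖ - ‖X‖ ≤ ‖x - X‖ := norm_sub_norm_le x X
    have h2 : (0:ℝ) ≤ ‖x‖ - ‖X‖ := by nlinarith [abs_nonneg a, norm_nonneg X]
    have h3 : (‖x‖ - ‖X‖)^2 ≤ ‖x - X‖^2 := by nlinarith [norm_nonneg (x - X)]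
    have h4 : -|a| ≤ a := neg_abs_le a
    nlinarith [norm_nonneg X, abs_nonneg a]
  have hsp : (0:ℝ) < ‖x - X‖^2 + a := lt_of_lt_of_le (by nlinarith) hkey
  have h1 : ‖x - X‖^2 ∈ Set.Ioi (-a) := by
    simp only [Set.mem_Ioi]; linarith
  have h2 : ‖x‖^2 ∈ Set.Ioi (0:ℝ) := by
    simp only [Set.mem_Ioi]; nlinarith
  rw [final x h1 h2]
  have habs : |(-96*a^2/((‖x - X‖^2 + a)^4))| = 96*a^2/((‖x - X‖^2 + a)^4) := by
    rw [abs_div, abs_of_pos (pow_pos hsp 4)]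
    congr 1
    rw [abs_of_nonpos (by nlinarith [sq_nonneg a])]
    ring
  rw [habs]
  have hD4 : (‖x‖^2/2)^4 ≤ (‖x - X‖^2 + a)^4 := pow_le_pow_left₀ (by positivity) hkey 4
  have step1 : 96*a^2/((‖x - X‖^2 + a)^4) ≤ 96*a^2/((‖x‖^2/2)^4) :=
    div_le_div_of_nonneg_left (by positivity) (by positivity) hD4
  refine le_trans step1 ?_
  rw [div_le_div_iff₀ (by positivity) (by positivity)]
  have hpow : ‖x‖^6 ≤ ‖x‖^8 := pow_le_pow_right₀ hN1 (by norm_num)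
  nlinarith [sq_nonneg a, pow_pos (lt_of_lt_of_le one_pos hN1) 6, sq_nonneg (a*‖x‖^3)]
end
end
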